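/- arXiv:1408.3064 — 5 statements merged into one kernel-verified Lean document; each statement's English description precedes it below -/
import Mathlib

section
/- Let N be a positive integer, let a_0, a_1, …, a_{N−1} be complex numbers, and let H be an integer with 0 ≤ H ≤ N−1. Then |(1/N) Σ_{n=0}^{N−1} a_n|² ≤ (N+H)/(N²(H+1)) · Σ_{n=0}^{N−1} |a_n|² + 2(N+H)/(N²(H+1)²) · Σ_{h=1}^{H} (H+1−h) · Re( Σ_{n=0}^{N−h−1} a_n · conj(a_{n+h}) ). -/
/-!
Let `w r` be the sum of the `a m` with `m ≤ r ≤ m + H`. Each `a m` lies in exactly `H + 1` of the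
`N + H` windows `r < N + H`, so `(H + 1) ∑ a = ∑ w`, and Cauchy–Schwarz over the windows gives
`(H + 1)² ‖∑ a‖² ≤ (N + H) ∑ ‖w r‖²`. Expanding `‖w r‖²`, a pair `(m, m + h)` is counted once for
each window containing both indices, that is `H + 1 - h` times, which is the right-hand side.
-/

open Finset

section DoubleSum

variable {M : Type*} [AddCommMonoid M]

theorem sum_range_sum_Ico_succ_eq_sum_Ico_sum_range (N : ℕ) (g : ℕ → ℕ → M) :
    ∑ m ∈ range N, ∑ m' ∈ Ico (m + 1) N, g m m' =
      ∑ h ∈ Ico 1 N, ∑ m ∈ range (N - h), g m (m + h) := by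
  rw [eq_comm, sum_comm' (t' := range N) (s' := fun m => Ico 1 (N - m)) (fun h m => by
    simp only [mem_Ico, mem_range]; omega)]
  refine sum_congr rfl fun m hm => ?_
  have hmN : N - m + m = N := Nat.sub_add_cancel (mem_range.mp hm).le
  simp_rw [add_comm m, sum_Ico_add' (g m) 1 (N - m) m, hmN]

theorem sum_range_sum_range_eq_sum_diag_add_sum_offdiag (N : ℕ) (f : ℕ → ℕ → M) :
    ∑ m ∈ range N, ∑ m' ∈ range N, f m m' =
      ∑ m ∈ range N, f m m + ∑ h ∈ Ico 1 N, ∑ m ∈ range (N - h), (f m (m + h) + f (m + h) m) := by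
  have row : ∀ m ∈ range N, ∑ m' ∈ range N, f m m' =
      ∑ m' ∈ range m, f m m' + (f m m + ∑ m' ∈ Ico (m + 1) N, f m m') := fun m hm => by
    rw [← sum_eq_sum_Ico_succ_bot (mem_range.mp hm), sum_range_add_sum_Ico _ (mem_range.mp hm).le]
  have lower : ∑ m ∈ range N, ∑ m' ∈ range m, f m m' =
      ∑ m' ∈ range N, ∑ m ∈ Ico (m' + 1) N, f m m' :=
    sum_comm' fun m m' => by simp only [mem_Ico, mem_range]; omega
  rw [sum_congr rfl row, sum_add_distrib, sum_add_distrib, lower,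
    sum_range_sum_Ico_succ_eq_sum_Ico_sum_range, sum_range_sum_Ico_succ_eq_sum_Ico_sum_range]
  simp only [sum_add_distrib]
  abel

end DoubleSum

theorem norm_sum_sq_le_card_mul_sum_norm_sq {ι E : Type*} [SeminormedAddCommGroup E]
    (s : Finset ι) (z : ι → E) : ‖∑ i ∈ s, z i‖ ^ 2 ≤ #s * ∑ i ∈ s, ‖z i‖ ^ 2 :=
  (pow_le_pow_left₀ (norm_nonneg _) (norm_sum_le s z) 2).trans sq_sum_le_card_mul_sum_sq

section Window

variable {M : Type*} [AddCommMonoid M]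

def windowSum (a : ℕ → M) (N H r : ℕ) : M :=
  ∑ m ∈ range N with r ∈ Icc m (m + H), a m

def windowOverlap (N H m m' : ℕ) : ℕ :=
  #{r ∈ range (N + H) | r ∈ Icc m (m + H) ∧ r ∈ Icc m' (m' + H)}

theorem windowOverlap_comm (N H m m' : ℕ) : windowOverlap N H m m' = windowOverlap N H m' m := by
  simp only [windowOverlap, and_comm]

-- `H + 1 - h` is truncated: windows more than `H` apart are disjoint.
theorem windowOverlap_self_add {N m : ℕ} (H h : ℕ) (hm : m < N) :
    windowOverlap N H m (m + h) = H + 1 - h := by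
  have hinter : {r ∈ range (N + H) | r ∈ Icc m (m + H) ∧ r ∈ Icc (m + h) (m + h + H)} =
      Icc (m + h) (m + H) := by
    ext r
    simp only [mem_filter, mem_range, mem_Icc]
    omega
  rw [windowOverlap, hinter, Nat.card_Icc]
  omega

theorem sum_windowSum (a : ℕ → M) (N H : ℕ) :
    ∑ r ∈ range (N + H), windowSum a N H r = (H + 1) • ∑ m ∈ range N, a m := by
  rw [smul_sum]
  unfold windowSum
  rw [sum_comm' (t' := range N) (s' := fun m => Icc m (m + H)) fun r m => by
    simp only [mem_filter, mem_range, mem_Icc]; omega]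
  refine sum_congr rfl fun m _ => ?_
  rw [sum_const, Nat.card_Icc]
  congr 1
  omega

theorem sum_windowSum_mul_conj (a : ℕ → ℂ) (N H : ℕ) :
    ∑ r ∈ range (N + H), windowSum a N H r * starRingEnd ℂ (windowSum a N H r) =
      ∑ m ∈ range N, ∑ m' ∈ range N,
        (windowOverlap N H m m' : ℂ) * (a m * starRingEnd ℂ (a m')) := by
  simp only [windowSum, sum_filter, map_sum, apply_ite (starRingEnd ℂ), map_zero, sum_mul_sum,
    ite_zero_mul_ite_zero]
  rw [sum_comm]
  refine sum_congr rfl fun m _ => ?_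
  rw [sum_comm]
  refine sum_congr rfl fun m' _ => ?_
  rw [← sum_filter, sum_const, nsmul_eq_mul, windowOverlap]

theorem sum_norm_sq_windowSum (a : ℕ → ℂ) (N H : ℕ) :
    ∑ r ∈ range (N + H), ‖windowSum a N H r‖ ^ 2 =
      ((H : ℝ) + 1) * ∑ n ∈ range N, ‖a n‖ ^ 2 +
        2 * ∑ h ∈ Icc 1 H, ((H : ℝ) + 1 - h) *
          (∑ n ∈ range (N - h), a n * starRingEnd ℂ (a (n + h))).re := by
  have norm_sq (z : ℂ) : ‖z‖ ^ 2 = (z * starRingEnd ℂ z).re := by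
    rw [Complex.mul_conj, Complex.ofReal_re, Complex.normSq_eq_norm_sq]
  have diag : ∀ m ∈ range N,
      ((windowOverlap N H m m : ℂ) * (a m * starRingEnd ℂ (a m))).re =
        ((H : ℝ) + 1) * ‖a m‖ ^ 2 := by
    intro m hm
    have hself := windowOverlap_self_add H 0 (mem_range.mp hm)
    rw [add_zero, Nat.sub_zero] at hself
    rw [hself, norm_sq, ← Complex.ofReal_natCast, Complex.re_ofReal_mul]
    push_cast
    rfl
  have offdiag : ∀ h ∈ Ico 1 N,
      (∑ m ∈ range (N - h), ((windowOverlap N H m (m + h) : ℂ) * (a m * starRingEnd ℂ (a (m + h))) +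
        (windowOverlap N H (m + h) m : ℂ) * (a (m + h) * starRingEnd ℂ (a m)))).re =
      ((H + 1 - h : ℕ) : ℝ) * (2 * (∑ n ∈ range (N - h), a n * starRingEnd ℂ (a (n + h))).re) := by
    intro h _
    rw [Complex.re_sum, Complex.re_sum, mul_sum, mul_sum]
    refine sum_congr rfl fun m hm => ?_
    have hmN : m < N := by simp only [mem_range] at hm; omega
    rw [windowOverlap_comm N H (m + h), windowOverlap_self_add H h hmN, ← Complex.ofReal_natCast,
      Complex.add_re, Complex.re_ofReal_mul, Complex.re_ofReal_mul]
    have hswap : a (m + h) * starRingEnd ℂ (a m) =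
        starRingEnd ℂ (a m * starRingEnd ℂ (a (m + h))) := by
      rw [map_mul, Complex.conj_conj, mul_comm]
    rw [hswap, Complex.conj_re]
    ring
  calc ∑ r ∈ range (N + H), ‖windowSum a N H r‖ ^ 2
      = (∑ r ∈ range (N + H), windowSum a N H r * starRingEnd ℂ (windowSum a N H r)).re := by
        simp only [norm_sq, Complex.re_sum]
    _ = ∑ m ∈ range N, ((windowOverlap N H m m : ℂ) * (a m * starRingEnd ℂ (a m))).re +
        ∑ h ∈ Ico 1 N, (∑ m ∈ range (N - h),
          ((windowOverlap N H m (m + h) : ℂ) * (a m * starRingEnd ℂ (a (m + h))) +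
            (windowOverlap N H (m + h) m : ℂ) * (a (m + h) * starRingEnd ℂ (a m)))).re := by
        rw [sum_windowSum_mul_conj, sum_range_sum_range_eq_sum_diag_add_sum_offdiag,
          Complex.add_re, Complex.re_sum, Complex.re_sum]
    _ = ((H : ℝ) + 1) * ∑ n ∈ range N, ‖a n‖ ^ 2 + ∑ h ∈ Ico 1 N, ((H + 1 - h : ℕ) : ℝ) *
          (2 * (∑ n ∈ range (N - h), a n * starRingEnd ℂ (a (n + h))).re) := by
        rw [sum_congr rfl diag, sum_congr rfl offdiag, mul_sum]
    _ = _ := by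
        rw [mul_sum (Icc 1 H)]
        congr 1
        -- terms with `H < h` have weight `0`, terms with `N ≤ h` an empty inner sum
        refine sum_congr_of_eq_on_inter (fun h hN hH => ?_) (fun h hH hN => ?_) fun h _ hH => ?_
        · simp only [mem_Ico, mem_Icc] at hN hH
          rw [Nat.sub_eq_zero_of_le (by omega), Nat.cast_zero, zero_mul]
        · simp only [mem_Ico, mem_Icc] at hN hH
          rw [Nat.sub_eq_zero_of_le (by omega), range_zero, sum_empty, Complex.zero_re,
            mul_zero, mul_zero]
        · rw [Nat.cast_sub ((mem_Icc.mp hH).2.trans (Nat.le_succ H))]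
          push_cast
          ring

end Window

theorem van_der_corput_inequality_general (N H : ℕ) (a : ℕ → ℂ) :
    ‖(N : ℂ)⁻¹ * ∑ n ∈ Finset.range N, a n‖ ^ 2 ≤
      ((N : ℝ) + H) / ((N : ℝ) ^ 2 * ((H : ℝ) + 1)) * ∑ n ∈ Finset.range N, ‖a n‖ ^ 2
      + 2 * ((N : ℝ) + H) / ((N : ℝ) ^ 2 * ((H : ℝ) + 1) ^ 2) *
          ∑ h ∈ Finset.Icc 1 H, ((H : ℝ) + 1 - (h : ℝ)) *
            (∑ n ∈ Finset.range (N - h), a n * (starRingEnd ℂ) (a (n + h))).re := by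
  set S := ∑ n ∈ range N, a n
  set Q := ∑ n ∈ range N, ‖a n‖ ^ 2
  set R := ∑ h ∈ Icc 1 H, ((H : ℝ) + 1 - h) *
    (∑ n ∈ range (N - h), a n * starRingEnd ℂ (a (n + h))).re
  have key : ((H : ℝ) + 1) ^ 2 * ‖S‖ ^ 2 ≤ ((N : ℝ) + H) * (((H : ℝ) + 1) * Q + 2 * R) :=
    calc ((H : ℝ) + 1) ^ 2 * ‖S‖ ^ 2 = ‖∑ r ∈ range (N + H), windowSum a N H r‖ ^ 2 := by
          rw [sum_windowSum, nsmul_eq_mul, norm_mul, mul_pow, Complex.norm_natCast]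
          push_cast
          rfl
      _ ≤ ((N : ℝ) + H) * ∑ r ∈ range (N + H), ‖windowSum a N H r‖ ^ 2 := by
          simpa using norm_sum_sq_le_card_mul_sum_norm_sq (range (N + H)) (windowSum a N H)
      _ = ((N : ℝ) + H) * (((H : ℝ) + 1) * Q + 2 * R) := by rw [sum_norm_sq_windowSum]
  calc ‖(N : ℂ)⁻¹ * S‖ ^ 2 = ((H : ℝ) + 1) ^ 2 * ‖S‖ ^ 2 / ((N : ℝ) ^ 2 * ((H : ℝ) + 1) ^ 2) := by
        rw [norm_mul, norm_inv, Complex.norm_natCast]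
        field_simp
    _ ≤ ((N : ℝ) + H) * (((H : ℝ) + 1) * Q + 2 * R) / ((N : ℝ) ^ 2 * ((H : ℝ) + 1) ^ 2) := by
        gcongr
    _ = _ := by
        field_simp

/-- van der Corput's inequality: for complex numbers `a_0, …, a_{N-1}` and `0 ≤ H ≤ N-1`,
`|(1/N) ∑_{n<N} a_n|² ≤ (N+H)/(N²(H+1)) ∑_{n<N} |a_n|²
  + 2(N+H)/(N²(H+1)²) ∑_{h=1}^H (H+1-h) Re(∑_{n=0}^{N-h-1} a_n conj(a_{n+h}))`. -/
theorem van_der_corput_inequality (N H : ℕ) (hN : 1 ≤ N) (hH : H ≤ N - 1) (a : ℕ → ℂ) :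
    ‖(N : ℂ)⁻¹ * ∑ n ∈ Finset.range N, a n‖ ^ 2 ≤
      ((N : ℝ) + H) / ((N : ℝ) ^ 2 * ((H : ℝ) + 1)) * ∑ n ∈ Finset.range N, ‖a n‖ ^ 2
      + 2 * ((N : ℝ) + H) / ((N : ℝ) ^ 2 * ((H : ℝ) + 1) ^ 2) *
          ∑ h ∈ Finset.Icc 1 H, ((H : ℝ) + 1 - (h : ℝ)) *
            (∑ n ∈ Finset.range (N - h), a n * (starRingEnd ℂ) (a (n + h))).re :=
  van_der_corput_inequality_general N H a
end

section
/- Let (X, F, μ, T) be an invertible measure-preserving system on a probability space, let a, b ∈ ℤ, let g, h ∈ L^∞(μ), and let p be a polynomial with real coefficients. Then ∫ sup_{N ≥ 1} sup_{t ∈ ℝ} |(1/N) Σ_{n=1}^{N} g(T^{an}x) h(T^{bn}x) e^{2πi p(n) t}| dμ(x) ≤ 2 ‖h‖_∞ ‖g‖_{L²(μ)}. -/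
/-!
Since the weights `e^{2πi p(n) t}` have modulus one, the averages are bounded pointwise by
`‖h‖_∞` times the Birkhoff averages of `|g|` under `S = T^a`, evaluated at `S x`. As `S` preserves
`μ`, it remains to show `∫ sup_N A_N |g| ≤ 2 ‖g‖₂` for the maximal Birkhoff average `A^*`.
Hopf's maximal ergodic lemma gives the weak-type bound `t μ{A^* > t} ≤ ∫_{A^* > t} |g|`, which
Cauchy–Schwarz turns into `μ{A^* > t} ≤ min(1, ‖g‖₂² / t²)`; integrating over `t > 0` gives `2 ‖g‖₂`.
-/

open MeasureTheory Filter Finset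
open scoped ENNReal

section BirkhoffMax

variable {α : Type*} {f : α → α} {g : α → ℝ}

def birkhoffMax (f : α → α) (g : α → ℝ) : ℕ → α → ℝ
  | 0 => 0
  | n + 1 => birkhoffMax f g n ⊔ birkhoffSum f g (n + 1)

lemma birkhoffMax_nonneg (n : ℕ) (x : α) : 0 ≤ birkhoffMax f g n x := by
  induction n with
  | zero => rfl
  | succ n ih => exact ih.trans le_sup_left

lemma birkhoffMax_mono : Monotone (birkhoffMax f g) :=
  monotone_nat_of_le_succ fun _ => le_sup_left

lemma birkhoffSum_le_birkhoffMax {m n : ℕ} (h : m ≤ n) (x : α) :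
    birkhoffSum f g m x ≤ birkhoffMax f g n x := by
  induction n with
  | zero => simp [Nat.le_zero.mp h, birkhoffMax]
  | succ n ih =>
    rcases Nat.le_succ_iff.mp h with h | rfl
    · exact (ih h).trans le_sup_left
    · exact le_sup_right

lemma exists_birkhoffSum_eq_birkhoffMax (n : ℕ) (x : α) :
    ∃ m ≤ n, birkhoffSum f g m x = birkhoffMax f g n x := by
  induction n with
  | zero => exact ⟨0, le_rfl, rfl⟩
  | succ n ih =>
    rcases max_choice (birkhoffMax f g n x) (birkhoffSum f g (n + 1) x) with h | h
    · obtain ⟨m, hm, hm'⟩ := ih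
      exact ⟨m, hm.trans n.le_succ, hm'.trans h.symm⟩
    · exact ⟨n + 1, le_rfl, h.symm⟩

lemma birkhoffMax_le_add_birkhoffMax_apply {n : ℕ} {x : α} (hx : 0 < birkhoffMax f g n x) :
    birkhoffMax f g n x ≤ g x + birkhoffMax f g n (f x) := by
  obtain ⟨m, hmn, hm⟩ := exists_birkhoffSum_eq_birkhoffMax (f := f) (g := g) n x
  cases m with
  | zero => simp [← hm] at hx
  | succ m =>
    rw [← hm, birkhoffSum_succ']
    gcongr
    exact birkhoffSum_le_birkhoffMax (by omega) _

lemma setOf_exists_birkhoffSum_pos :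
    {x | ∃ n, 0 < birkhoffSum f g n x} = ⋃ n, {x | 0 < birkhoffMax f g n x} := by
  ext x
  simp only [Set.mem_iUnion]
  constructor
  · rintro ⟨n, hn⟩
    exact ⟨n, hn.trans_le (birkhoffSum_le_birkhoffMax le_rfl x)⟩
  · rintro ⟨n, hn⟩
    obtain ⟨m, -, hm⟩ := exists_birkhoffSum_eq_birkhoffMax (f := f) (g := g) n x
    exact ⟨m, hm ▸ hn⟩

lemma birkhoffSum_sub_const (f : α → α) (g : α → ℝ) (t : ℝ) (n : ℕ) (x : α) :
    birkhoffSum f (fun y => g y - t) n x = birkhoffSum f g n x - n * t := by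
  simp [birkhoffSum, Finset.sum_sub_distrib]

lemma sum_Icc_iterate_eq_birkhoffSum (f : α → α) (g : α → ℝ) (N : ℕ) (x : α) :
    ∑ n ∈ Finset.Icc 1 N, g (f^[n] x) = birkhoffSum f g N (f x) := by
  induction N with
  | zero => simp
  | succ N ih =>
    rw [Finset.sum_Icc_succ_top (by omega), ih, birkhoffSum_succ, Function.iterate_succ_apply]

end BirkhoffMax

section MaximalErgodic

variable {α : Type*} [MeasurableSpace α] {μ : Measure α} {f : α → α} {g : α → ℝ}

lemma measurable_birkhoffSum (hf : Measurable f) (hg : Measurable g) (n : ℕ) :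
    Measurable (birkhoffSum f g n) :=
  Finset.measurable_fun_sum _ fun k _ => hg.comp (hf.iterate k)

lemma integrable_birkhoffSum (hf : MeasurePreserving f μ μ) (hg : Integrable g μ) (n : ℕ) :
    Integrable (birkhoffSum f g n) μ :=
  integrable_finsetSum _ fun k _ => (hf.iterate k).integrable_comp_of_integrable hg

lemma measurable_birkhoffMax (hf : Measurable f) (hg : Measurable g) (n : ℕ) :
    Measurable (birkhoffMax f g n) := by
  induction n with
  | zero => exact measurable_const
  | succ n ih => exact ih.sup (measurable_birkhoffSum hf hg _)

lemma integrable_birkhoffMax (hf : MeasurePreserving f μ μ) (hg : Integrable g μ) (n : ℕ) :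
    Integrable (birkhoffMax f g n) μ := by
  induction n with
  | zero => exact integrable_zero _ _ _
  | succ n ih => exact ih.sup (integrable_birkhoffSum hf hg _)

lemma setIntegral_birkhoffMax_pos_nonneg (hf : MeasurePreserving f μ μ) (hgm : Measurable g)
    (hg : Integrable g μ) (n : ℕ) :
    0 ≤ ∫ x in {x | 0 < birkhoffMax f g n x}, g x ∂μ := by
  set M := birkhoffMax f g n
  have hMm : Measurable M := measurable_birkhoffMax hf.measurable hgm n
  have hM : Integrable M μ := integrable_birkhoffMax hf hg n
  have hMf : Integrable (M ∘ f) μ := hf.integrable_comp_of_integrable hM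
  set E := {x | 0 < M x}
  have hE : MeasurableSet E := measurableSet_lt measurable_const hMm
  have hME : ∫ x in E, M x ∂μ = ∫ x, M x ∂μ :=
    setIntegral_eq_integral_of_forall_compl_eq_zero fun x hx =>
      le_antisymm (not_lt.mp hx) (birkhoffMax_nonneg n x)
  have hMfE : ∫ x in E, M (f x) ∂μ ≤ ∫ x, M x ∂μ := by
    calc ∫ x in E, M (f x) ∂μ ≤ ∫ x, M (f x) ∂μ :=
          setIntegral_le_integral hMf (ae_of_all _ fun x => birkhoffMax_nonneg n (f x))
      _ = ∫ x, M x ∂μ := by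
          rw [← integral_map hf.aemeasurable hMm.aestronglyMeasurable, hf.map_eq]
  calc (0 : ℝ) ≤ ∫ x in E, M x ∂μ - ∫ x in E, M (f x) ∂μ := by linarith
    _ = ∫ x in E, (M x - M (f x)) ∂μ := (integral_sub hM.integrableOn hMf.integrableOn).symm
    _ ≤ ∫ x in E, g x ∂μ := setIntegral_mono_on (hM.sub hMf).integrableOn hg.integrableOn hE
        fun x hx => by linarith [birkhoffMax_le_add_birkhoffMax_apply (f := f) (g := g) hx]

theorem setIntegral_exists_birkhoffSum_pos_nonneg (hf : MeasurePreserving f μ μ)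
    (hgm : Measurable g) (hg : Integrable g μ) :
    0 ≤ ∫ x in {x | ∃ n, 0 < birkhoffSum f g n x}, g x ∂μ := by
  rw [setOf_exists_birkhoffSum_pos]
  exact ge_of_tendsto (tendsto_setIntegral_of_monotone
    (fun n => measurableSet_lt measurable_const (measurable_birkhoffMax hf.measurable hgm n))
    (fun _ _ hmn _ hx => hx.trans_le (birkhoffMax_mono hmn _)) hg.integrableOn)
    (Filter.Eventually.of_forall (setIntegral_birkhoffMax_pos_nonneg hf hgm hg))

theorem mul_measureReal_le_setIntegral [IsFiniteMeasure μ] (hf : MeasurePreserving f μ μ)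
    (hgm : Measurable g) (hg : Integrable g μ) (t : ℝ) :
    t * μ.real {x | ∃ n : ℕ, n * t < birkhoffSum f g n x}
      ≤ ∫ x in {x | ∃ n : ℕ, n * t < birkhoffSum f g n x}, g x ∂μ := by
  have hopf := setIntegral_exists_birkhoffSum_pos_nonneg (g := fun x => g x - t) hf
    (hgm.sub measurable_const) (hg.sub (integrable_const t))
  simp only [birkhoffSum_sub_const, sub_pos] at hopf
  rw [integral_sub hg.integrableOn (integrableOn_const (measure_ne_top _ _)), setIntegral_const,
    smul_eq_mul] at hopf
  linarith

theorem ofReal_sq_mul_measure_le [IsFiniteMeasure μ] (hf : MeasurePreserving f μ μ)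
    (hgm : Measurable g) (hg : MemLp g 2 μ) {t : ℝ} (ht : 0 ≤ t) :
    ENNReal.ofReal t ^ 2 * μ {x | ∃ n : ℕ, n * t < birkhoffSum f g n x} ≤ eLpNorm g 2 μ ^ 2 := by
  set E := {x | ∃ n : ℕ, n * t < birkhoffSum f g n x}
  have hgi : Integrable g μ := hg.integrable one_le_two
  have h1 : ENNReal.ofReal t * μ E ≤ eLpNorm g 1 (μ.restrict E) := by
    calc ENNReal.ofReal t * μ E = ENNReal.ofReal (t * μ.real E) := by
          rw [ENNReal.ofReal_mul ht, ofReal_measureReal]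
      _ ≤ ENNReal.ofReal (∫ x in E, g x ∂μ) :=
          ENNReal.ofReal_le_ofReal (mul_measureReal_le_setIntegral hf hgm hgi t)
      _ ≤ ENNReal.ofReal (∫ x in E, ‖g x‖ ∂μ) := ENNReal.ofReal_le_ofReal
          (integral_mono hgi.integrableOn hgi.norm.integrableOn fun x => Real.le_norm_self _)
      _ = eLpNorm g 1 (μ.restrict E) := by
          rw [ofReal_integral_norm_eq_lintegral_enorm hgi.integrableOn,
            eLpNorm_one_eq_lintegral_enorm]
  have h2 : eLpNorm g 1 (μ.restrict E) ≤ eLpNorm g 2 μ * μ E ^ (1 / 2 : ℝ) := by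
    calc eLpNorm g 1 (μ.restrict E)
        ≤ eLpNorm g 2 (μ.restrict E) *
            μ.restrict E Set.univ ^ (1 / (1 : ℝ≥0∞).toReal - 1 / (2 : ℝ≥0∞).toReal) :=
          eLpNorm_le_eLpNorm_mul_rpow_measure_univ one_le_two hgm.aestronglyMeasurable.restrict
      _ ≤ eLpNorm g 2 μ * μ E ^ (1 / 2 : ℝ) := by
          rw [Measure.restrict_apply_univ,
            show 1 / (1 : ℝ≥0∞).toReal - 1 / (2 : ℝ≥0∞).toReal = 1 / 2 by norm_num]
          exact mul_le_mul_left (eLpNorm_restrict_le g 2 μ E) _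
  rcases eq_or_ne (μ E) 0 with h0 | h0
  · simp [h0]
  refine (ENNReal.mul_le_mul_iff_left h0 (measure_ne_top μ E)).mp ?_
  calc ENNReal.ofReal t ^ 2 * μ E * μ E = (ENNReal.ofReal t * μ E) ^ 2 := by ring
    _ ≤ (eLpNorm g 2 μ * μ E ^ (1 / 2 : ℝ)) ^ 2 := by gcongr ?_ ^ 2; exact h1.trans h2
    _ = eLpNorm g 2 μ ^ 2 * μ E := by
        rw [mul_pow, ← ENNReal.rpow_natCast (μ E ^ _), ← ENNReal.rpow_mul]
        norm_num

end MaximalErgodic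

section LayerCake

variable {α : Type*} [MeasurableSpace α] {μ : Measure α}

lemma volume_restrict_Ioi_setOf_ofReal_lt (a : ℝ≥0∞) :
    volume.restrict (Set.Ioi (0 : ℝ)) {t | ENNReal.ofReal t < a} = a := by
  rw [Measure.restrict_apply' measurableSet_Ioi]
  rcases eq_or_ne a ⊤ with rfl | ha
  · simp [Real.volume_Ioi]
  · have : {t | ENNReal.ofReal t < a} ∩ Set.Ioi 0 = Set.Ioo 0 a.toReal := by
      ext t
      exact ⟨fun ⟨h, h0⟩ => ⟨h0, (ENNReal.ofReal_lt_iff_lt_toReal h0.le ha).1 h⟩,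
        fun ⟨h0, h⟩ => ⟨(ENNReal.ofReal_lt_iff_lt_toReal h0.le ha).2 h, h0⟩⟩
    rw [this, Real.volume_Ioo, sub_zero, ENNReal.ofReal_toReal ha]

theorem lintegral_eq_lintegral_meas_ofReal_lt [SFinite μ] {f : α → ℝ≥0∞} (hf : Measurable f) :
    ∫⁻ x, f x ∂μ = ∫⁻ t in Set.Ioi 0, μ {x | ENNReal.ofReal t < f x} := by
  have hS : MeasurableSet {p : α × ℝ | ENNReal.ofReal p.2 < f p.1} :=
    measurableSet_lt (ENNReal.measurable_ofReal.comp measurable_snd) (hf.comp measurable_fst)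
  calc ∫⁻ x, f x ∂μ
      = ∫⁻ x, volume.restrict (Set.Ioi (0 : ℝ)) {t | ENNReal.ofReal t < f x} ∂μ := by
        simp only [volume_restrict_Ioi_setOf_ofReal_lt]
    _ = (μ.prod (volume.restrict (Set.Ioi 0))) {p : α × ℝ | ENNReal.ofReal p.2 < f p.1} :=
        (Measure.prod_apply hS).symm
    _ = ∫⁻ t in Set.Ioi 0, μ {x | ENNReal.ofReal t < f x} := Measure.prod_apply_symm hS

lemma lintegral_Ioi_min_one_sq_div_le (c : ℝ≥0∞) :
    ∫⁻ t in Set.Ioi (0 : ℝ), min 1 (c ^ 2 / ENNReal.ofReal t ^ 2) ≤ 2 * c := by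
  rcases eq_or_ne c ⊤ with rfl | hc
  · simp
  rcases eq_or_ne c 0 with rfl | hc0
  · simp
  set r := c.toReal
  have hr : 0 < r := ENNReal.toReal_pos hc0 hc
  have hrc : ENNReal.ofReal r = c := ENNReal.ofReal_toReal hc
  have hIoc : ∫⁻ t in Set.Ioc 0 r, min 1 (c ^ 2 / ENNReal.ofReal t ^ 2) ≤ c :=
    calc _ ≤ ∫⁻ t in Set.Ioc 0 r, 1 := lintegral_mono fun t => min_le_left _ _
      _ = c := by rw [setLIntegral_one, Real.volume_Ioc, sub_zero, hrc]
  have hIoi : ∫⁻ t in Set.Ioi r, min 1 (c ^ 2 / ENNReal.ofReal t ^ 2) ≤ c :=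
    calc _ ≤ ∫⁻ t in Set.Ioi r, c ^ 2 * ENNReal.ofReal (t ^ (-2 : ℝ)) := by
          refine setLIntegral_mono' measurableSet_Ioi fun t ht => (min_le_right _ _).trans_eq ?_
          have ht0 : 0 < t := hr.trans ht
          rw [div_eq_mul_inv, ← ENNReal.ofReal_pow ht0.le,
            ← ENNReal.ofReal_inv_of_pos (by positivity), Real.rpow_neg ht0.le, Real.rpow_two]
      _ = c ^ 2 * ENNReal.ofReal r⁻¹ := by
          rw [lintegral_const_mul _ (by fun_prop),
            ← ofReal_integral_eq_lintegral_ofReal (integrableOn_Ioi_rpow_of_lt (by norm_num) hr)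
              ((ae_restrict_iff' measurableSet_Ioi).2 (ae_of_all _ fun t ht =>
                Real.rpow_nonneg (hr.trans ht).le _)),
            integral_Ioi_rpow_of_lt (by norm_num) hr]
          norm_num [Real.rpow_neg_one]
      _ = c := by
          rw [← hrc, ← ENNReal.ofReal_pow hr.le, ← ENNReal.ofReal_mul (by positivity)]
          field_simp
  calc ∫⁻ t in Set.Ioi 0, min 1 (c ^ 2 / ENNReal.ofReal t ^ 2)
      ≤ ∫⁻ t in Set.Ioc 0 r ∪ Set.Ioi r, min 1 (c ^ 2 / ENNReal.ofReal t ^ 2) :=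
        lintegral_mono_set Set.Ioi_subset_Ioc_union_Ioi
    _ ≤ c + c := (lintegral_union_le _ _ _).trans (add_le_add hIoc hIoi)
    _ = 2 * c := (two_mul c).symm

end LayerCake

section MaximalFunction

variable {α : Type*} [MeasurableSpace α] {μ : Measure α} {f : α → α} {g : α → ℝ}

/-- The term `n = 0` is `ofReal 0 = 0`, so this is the supremum of the averages over `n ≥ 1`. -/
noncomputable def maximalBirkhoffAverage (f : α → α) (g : α → ℝ) (x : α) : ℝ≥0∞ :=
  ⨆ n : ℕ, ENNReal.ofReal (birkhoffAverage ℝ f g n x)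

omit [MeasurableSpace α] in
lemma ofReal_lt_maximalBirkhoffAverage_iff {t : ℝ} (ht : 0 ≤ t) (x : α) :
    ENNReal.ofReal t < maximalBirkhoffAverage f g x ↔ ∃ n : ℕ, n * t < birkhoffSum f g n x := by
  refine lt_iSup_iff.trans (exists_congr fun n => ?_)
  rw [ENNReal.ofReal_lt_ofReal_iff_of_nonneg ht, birkhoffAverage, smul_eq_mul]
  rcases n.eq_zero_or_pos with rfl | hn
  · simpa using ht
  · exact lt_inv_mul_iff₀ (by positivity)

lemma measurable_maximalBirkhoffAverage (hf : Measurable f) (hg : Measurable g) :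
    Measurable (maximalBirkhoffAverage f g) :=
  .iSup fun n => ((measurable_birkhoffSum hf hg n).const_smul (n : ℝ)⁻¹).ennreal_ofReal

theorem meas_ofReal_lt_maximalBirkhoffAverage_le [IsZeroOrProbabilityMeasure μ]
    (hf : MeasurePreserving f μ μ) (hgm : Measurable g) (hg : MemLp g 2 μ) {t : ℝ} (ht : 0 < t) :
    μ {x | ENNReal.ofReal t < maximalBirkhoffAverage f g x}
      ≤ min 1 (eLpNorm g 2 μ ^ 2 / ENNReal.ofReal t ^ 2) := by
  simp only [ofReal_lt_maximalBirkhoffAverage_iff ht.le]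
  refine le_min prob_le_one ((ENNReal.le_div_iff_mul_le (by simp [ht]) (by simp)).2 ?_)
  rw [mul_comm]
  exact ofReal_sq_mul_measure_le hf hgm hg ht.le

theorem lintegral_maximalBirkhoffAverage_le [IsZeroOrProbabilityMeasure μ]
    (hf : MeasurePreserving f μ μ) (hg : Measurable g) :
    ∫⁻ x, maximalBirkhoffAverage f g x ∂μ ≤ 2 * eLpNorm g 2 μ := by
  rcases eq_or_ne (eLpNorm g 2 μ) ⊤ with htop | hfin
  · simp [htop]
  have hg2 : MemLp g 2 μ := ⟨hg.aestronglyMeasurable, hfin.lt_top⟩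
  calc ∫⁻ x, maximalBirkhoffAverage f g x ∂μ
      = ∫⁻ t in Set.Ioi 0, μ {x | ENNReal.ofReal t < maximalBirkhoffAverage f g x} :=
        lintegral_eq_lintegral_meas_ofReal_lt (measurable_maximalBirkhoffAverage hf.measurable hg)
    _ ≤ ∫⁻ t in Set.Ioi 0, min 1 (eLpNorm g 2 μ ^ 2 / ENNReal.ofReal t ^ 2) :=
        setLIntegral_mono' measurableSet_Ioi fun t ht =>
          meas_ofReal_lt_maximalBirkhoffAverage_le hf hg hg2 ht
    _ ≤ 2 * eLpNorm g 2 μ := lintegral_Ioi_min_one_sq_div_le _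

end MaximalFunction

section WeightedAverages

variable {α : Type*} [MeasurableSpace α] {μ : Measure α}

theorem MeasureTheory.MeasurePreserving.zpow_toEquiv {T : α ≃ᵐ α}
    (hT : MeasurePreserving T μ μ) : ∀ k : ℤ, MeasurePreserving ⇑(T.toEquiv ^ k) μ μ
  | (n : ℕ) => by
    rw [zpow_natCast, Equiv.Perm.coe_pow]
    exact hT.iterate n
  | .negSucc n => by
    rw [zpow_negSucc, ← inv_pow, Equiv.Perm.coe_pow]
    exact (hT.symm T).iterate (n + 1)

lemma Equiv.Perm.zpow_mul_natCast_apply {β : Type*} (e : Equiv.Perm β) (k : ℤ) (n : ℕ) (x : β) :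
    (e ^ (k * n)) x = (⇑(e ^ k))^[n] x := by
  rw [zpow_mul, zpow_natCast, Equiv.Perm.coe_pow]

lemma enorm_inv_mul_sum_mul_le (N : ℕ) (u v : ℕ → ℂ) {C : ℝ≥0∞}
    (hv : ∀ n ∈ Finset.Icc 1 N, ‖v n‖ₑ ≤ C) :
    ‖(N : ℂ)⁻¹ * ∑ n ∈ Finset.Icc 1 N, u n * v n‖ₑ
      ≤ C * ENNReal.ofReal ((N : ℝ)⁻¹ * ∑ n ∈ Finset.Icc 1 N, ‖u n‖) := by
  calc ‖(N : ℂ)⁻¹ * ∑ n ∈ Finset.Icc 1 N, u n * v n‖ₑ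
      ≤ ‖(N : ℂ)⁻¹‖ₑ * ∑ n ∈ Finset.Icc 1 N, ‖u n‖ₑ * ‖v n‖ₑ := by
        rw [enorm_mul]
        gcongr
        exact (enorm_sum_le _ _).trans_eq (by simp_rw [enorm_mul])
    _ ≤ ‖(N : ℂ)⁻¹‖ₑ * ∑ n ∈ Finset.Icc 1 N, ‖u n‖ₑ * C := by
        gcongr with n hn
        exact hv n hn
    _ = C * ENNReal.ofReal ((N : ℝ)⁻¹ * ∑ n ∈ Finset.Icc 1 N, ‖u n‖) := by
        rw [ENNReal.ofReal_mul (by positivity),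
          ENNReal.ofReal_sum_of_nonneg fun _ _ => norm_nonneg _, ← Finset.sum_mul, ← ofReal_norm,
          norm_inv, Complex.norm_natCast]
        simp_rw [ofReal_norm]
        ring

theorem ae_enorm_weightedAverage_le {S R : α → α} (hS : Measure.QuasiMeasurePreserving S μ μ)
    (hR : Measure.QuasiMeasurePreserving R μ μ) {g h : α → ℂ} {G : α → ℝ}
    (hgG : ∀ᵐ x ∂μ, ‖g x‖ = G x) :
    ∀ᵐ x ∂μ, ∀ w : ℕ → ℂ, (∀ n, ‖w n‖ ≤ 1) → ∀ N : ℕ,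
      ‖(N : ℂ)⁻¹ * ∑ n ∈ Finset.Icc 1 N, g (S^[n] x) * h (R^[n] x) * w n‖ₑ
        ≤ eLpNorm h ⊤ μ * ENNReal.ofReal (birkhoffAverage ℝ S G N (S x)) := by
  have hg : ∀ᵐ x ∂μ, ∀ n, ‖g (S^[n] x)‖ = G (S^[n] x) :=
    ae_all_iff.2 fun n => (hS.iterate n).ae hgG
  have hh : ∀ᵐ x ∂μ, ∀ n, ‖h (R^[n] x)‖ₑ ≤ eLpNorm h ⊤ μ :=
    ae_all_iff.2 fun n => (hR.iterate n).ae (eLpNorm_exponent_top (f := h) ▸ ae_le_eLpNormEssSup)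
  filter_upwards [hg, hh] with x hgx hhx w hw N
  simp_rw [mul_assoc]
  refine (enorm_inv_mul_sum_mul_le (C := eLpNorm h ⊤ μ) N _ _ fun n _ => ?_).trans_eq ?_
  · have hwn : ‖w n‖ₑ ≤ 1 := by
      rw [← ofReal_norm]
      exact ENNReal.ofReal_le_one.2 (hw n)
    simpa [enorm_mul] using mul_le_mul' (hhx n) hwn
  · simp_rw [hgx, sum_Icc_iterate_eq_birkhoffSum]
    rfl

end WeightedAverages

theorem integral_sup_sup_wwAvg_le_general
    {X : Type*} [MeasurableSpace X] (μ : Measure X) [IsProbabilityMeasure μ]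
    (T : X ≃ᵐ X) (hT : MeasurePreserving T μ μ) (a b : ℤ)
    (g h : X → ℂ) (hg : MemLp g ⊤ μ) (p : Polynomial ℝ) :
    ∫⁻ x, (⨆ N : ℕ, ⨆ _ : 1 ≤ N, ⨆ t : ℝ,
        (‖(N : ℂ)⁻¹ * ∑ n ∈ Finset.Icc 1 N,
          g ((T.toEquiv ^ (a * (n : ℤ))) x) * h ((T.toEquiv ^ (b * (n : ℤ))) x) *
            Complex.exp (2 * Real.pi * Complex.I * (p.eval (n : ℝ)) * t)‖₊ : ENNReal)) ∂μ
      ≤ 2 * eLpNorm h ⊤ μ * eLpNorm g 2 μ := by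
  set S := ⇑(T.toEquiv ^ a)
  have hS : MeasurePreserving S μ μ := hT.zpow_toEquiv a
  set G : X → ℝ := fun x => ‖hg.aestronglyMeasurable.mk g x‖
  have hG : Measurable G := hg.aestronglyMeasurable.stronglyMeasurable_mk.measurable.norm
  have hgG : ∀ᵐ x ∂μ, ‖g x‖ = G x :=
    hg.aestronglyMeasurable.ae_eq_mk.mono fun x hx => congrArg norm hx
  have hM : Measurable (maximalBirkhoffAverage S G) :=
    measurable_maximalBirkhoffAverage hS.measurable hG
  have hpt := ae_enorm_weightedAverage_le hS.quasiMeasurePreserving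
    (hT.zpow_toEquiv b).quasiMeasurePreserving (h := h) hgG
  simp_rw [Equiv.Perm.zpow_mul_natCast_apply]
  calc _ ≤ ∫⁻ x, eLpNorm h ⊤ μ * maximalBirkhoffAverage S G (S x) ∂μ := by
        refine lintegral_mono_ae (hpt.mono fun x hx => iSup₂_le fun N _ => iSup_le fun t => ?_)
        refine (hx _ (fun n => (Complex.norm_exp _).trans_le (by simp)) N).trans ?_
        gcongr
        exact le_iSup (fun n => ENNReal.ofReal (birkhoffAverage ℝ S G n (S x))) N
    _ = eLpNorm h ⊤ μ * ∫⁻ x, maximalBirkhoffAverage S G x ∂μ := by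
        rw [lintegral_const_mul _ (show Measurable fun x => maximalBirkhoffAverage S G (S x) from
          hM.comp hS.measurable), hS.lintegral_comp hM]
    _ ≤ eLpNorm h ⊤ μ * (2 * eLpNorm G 2 μ) := by
        gcongr
        exact lintegral_maximalBirkhoffAverage_le hS hG
    _ = 2 * eLpNorm h ⊤ μ * eLpNorm g 2 μ := by
        rw [eLpNorm_congr_norm_ae (f := G) (g := g)
          (hgG.mono fun x hx => by rw [hx]; exact norm_norm _)]
        ring

/-- Maximal inequality: for an invertible measure-preserving system, `g, h ∈ L^∞(μ)`, integers
`a, b` and a real polynomial `p`,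
`∫ sup_{N ≥ 1} sup_t |(1/N) ∑_{n=1}^N g(T^{an}x) h(T^{bn}x) e^{2πi p(n) t}| dμ
  ≤ 2 ‖h‖_∞ ‖g‖_{L²(μ)}`. -/
theorem integral_sup_sup_wwAvg_le
    {X : Type*} [MeasurableSpace X] (μ : Measure X) [IsProbabilityMeasure μ]
    (T : X ≃ᵐ X) (hT : MeasurePreserving T μ μ) (a b : ℤ)
    (g h : X → ℂ) (hg : MemLp g ⊤ μ) (hh : MemLp h ⊤ μ) (p : Polynomial ℝ) :
    ∫⁻ x, (⨆ N : ℕ, ⨆ _ : 1 ≤ N, ⨆ t : ℝ,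
        (‖(N : ℂ)⁻¹ * ∑ n ∈ Finset.Icc 1 N,
          g ((T.toEquiv ^ (a * (n : ℤ))) x) * h ((T.toEquiv ^ (b * (n : ℤ))) x) *
            Complex.exp (2 * Real.pi * Complex.I * (p.eval (n : ℝ)) * t)‖₊ : ENNReal)) ∂μ
      ≤ 2 * eLpNorm h ⊤ μ * eLpNorm g 2 μ :=
  integral_sup_sup_wwAvg_le_general μ T hT a b g h hg p
end

section
/- Let (X, F, μ, T) be an invertible measure-preserving system on a probability space, let a, b ∈ ℤ, let p be a polynomial with real coefficients, and let f1, f2 ∈ L^∞(μ). Suppose there are sequences (f1^i) and (f2^i) in L^∞(μ) such that for j = 1,2 and every i one has ‖f_j^i‖_∞ ≤ ‖f_j‖_∞ and ‖f_j^i − f_j‖_{L²(μ)} → 0 as i → ∞, and such that for every i there is a measurable set of full μ-measure on which, for every t ∈ ℝ, the limit lim_{N→∞} W_N(f1^i,f2^i,x,p,t) exists. Then there is a measurable set of full μ-measure on which, for every t ∈ ℝ, the limit lim_{N→∞} W_N(f1,f2,x,p,t) exists. -/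
/-!
Put `σ = T^a` and `τ = T^b`. Off a null set the whole `T`-orbit of `x` satisfies
`|f2| ≤ ‖f2‖_∞` and `|f1^i| ≤ ‖f1‖_∞`, so uniformly in `t`
`|W_N(f1, f2) - W_N(f1^i, f2^i)| ≤ ‖f2‖_∞ A_N^σ(|f1 - f1^i| ∘ σ) + ‖f1‖_∞ A_N^τ(|f2 - f2^i| ∘ τ)`,
with `A_N^σ` the Birkhoff averages along `σ`. By the maximal ergodic theorem (Garsia's proof) the
set where some of these averages exceeds `c` has measure at most `‖f_j - f_j^i‖₁ / c → 0`. Hence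
for almost every `x` and every `ε > 0` some `i` makes `W_N(f1, f2)(x)` uniformly `ε`-close to the
convergent sequence `W_N(f1^i, f2^i)(x)`, which is therefore Cauchy.
-/

open MeasureTheory Filter Finset

/-- The Wiener-Wintner double recurrence average
`W_N(f1, f2, x, p, t) = (1/N) ∑_{n=1}^N f1(T^{an} x) f2(T^{bn} x) e^{2 π i p(n) t}`. -/
noncomputable def wwAvg {X : Type*} [MeasurableSpace X] (T : X ≃ᵐ X) (a b : ℤ)
    (f1 f2 : X → ℂ) (p : Polynomial ℝ) (t : ℝ) (N : ℕ) (x : X) : ℂ :=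
  (N : ℂ)⁻¹ * ∑ n ∈ Finset.Icc 1 N,
    f1 ((T.toEquiv ^ (a * (n : ℤ))) x) * f2 ((T.toEquiv ^ (b * (n : ℤ))) x) *
      Complex.exp (2 * Real.pi * Complex.I * (p.eval (n : ℝ)) * t)

open scoped ENNReal Topology

section MaxBirkhoffSum

variable {X : Type*} {σ : X → X} {g : X → ℝ}

def maxBirkhoffSum (σ : X → X) (g : X → ℝ) (N : ℕ) : X → ℝ :=
  (range (N + 1)).sup' nonempty_range_add_one fun n => birkhoffSum σ g n

theorem maxBirkhoffSum_apply (N : ℕ) (x : X) :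
    maxBirkhoffSum σ g N x =
      (range (N + 1)).sup' nonempty_range_add_one fun n => birkhoffSum σ g n x :=
  Finset.sup'_apply _ _ _

theorem birkhoffSum_le_maxBirkhoffSum {n N : ℕ} (h : n ≤ N) (x : X) :
    birkhoffSum σ g n x ≤ maxBirkhoffSum σ g N x := by
  rw [maxBirkhoffSum_apply]
  exact le_sup' (fun n => birkhoffSum σ g n x) (mem_range_succ_iff.2 h)

theorem maxBirkhoffSum_nonneg (N : ℕ) (x : X) : 0 ≤ maxBirkhoffSum σ g N x := by
  simpa using birkhoffSum_le_maxBirkhoffSum (σ := σ) (g := g) N.zero_le x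

theorem monotone_maxBirkhoffSum : Monotone (maxBirkhoffSum σ g) :=
  fun _ _ h => sup'_mono _ (range_subset_range.2 (by omega)) _

theorem maxBirkhoffSum_le_add_comp {N : ℕ} {x : X} (hx : 0 < maxBirkhoffSum σ g N x) :
    maxBirkhoffSum σ g N x ≤ g x + maxBirkhoffSum σ g N (σ x) := by
  obtain ⟨n, hn, hmax⟩ :=
    exists_mem_eq_sup' nonempty_range_add_one fun n => birkhoffSum σ g n x
  rw [← maxBirkhoffSum_apply] at hmax
  rw [hmax]
  cases n with
  | zero => simp [hmax] at hx
  | succ n =>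
    rw [birkhoffSum_succ']
    gcongr
    exact birkhoffSum_le_maxBirkhoffSum (by simp at hn; omega) _

theorem Measurable.maxBirkhoffSum [MeasurableSpace X] (hg : Measurable g) (hσ : Measurable σ)
    (N : ℕ) : Measurable (maxBirkhoffSum σ g N) :=
  sup'_induction (p := Measurable) _ _ (fun _ h₁ _ h₂ => h₁.sup h₂) fun _ _ =>
    Finset.measurable_sum _ fun k _ => hg.comp (hσ.iterate k)

end MaxBirkhoffSum

namespace MeasureTheory

variable {X : Type*} [MeasurableSpace X] {μ : Measure X} {σ : X → X} {g : X → ℝ}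

theorem Integrable.maxBirkhoffSum (hg : Integrable g μ) (hσ : MeasurePreserving σ μ μ) (N : ℕ) :
    Integrable (maxBirkhoffSum σ g N) μ :=
  sup'_induction (p := (Integrable · μ)) _ _ (fun _ h₁ _ h₂ => h₁.sup h₂) fun _ _ =>
    integrable_finsetSum _ fun k _ => (hσ.iterate k).integrable_comp_of_integrable hg

/-- Garsia: `M ≤ g + M ∘ σ` where `M > 0`, while `M = 0 ≤ M ∘ σ` elsewhere, and `M ∘ σ` has the
same integral as `M`. -/
theorem setIntegral_maxBirkhoffSum_pos_nonneg (hσ : MeasurePreserving σ μ μ)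
    (hgm : Measurable g) (hg : Integrable g μ) (N : ℕ) :
    0 ≤ ∫ x in {x | 0 < maxBirkhoffSum σ g N x}, g x ∂μ := by
  set M := maxBirkhoffSum σ g N
  have hM : Integrable M μ := hg.maxBirkhoffSum hσ N
  have hMm : Measurable M := hgm.maxBirkhoffSum hσ.measurable N
  have hE : MeasurableSet {x | 0 < M x} := measurableSet_lt measurable_const hMm
  have hMσi : Integrable (fun x => M (σ x)) μ := hσ.integrable_comp_of_integrable hM
  have hMσ : ∫ x, M (σ x) ∂μ = ∫ x, M x ∂μ := by
    rw [← integral_map hσ.aemeasurable hMm.aestronglyMeasurable, hσ.map_eq]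
  calc 0 = ∫ x, (M x - M (σ x)) ∂μ := by rw [integral_sub hM hMσi, hMσ, sub_self]
    _ ≤ ∫ x, {x | 0 < M x}.indicator g x ∂μ := by
        refine integral_mono (hM.sub hMσi) (hg.indicator hE) fun x => ?_
        by_cases hx : 0 < M x
        · rw [Set.indicator_of_mem (show x ∈ {x | 0 < M x} from hx)]
          linarith [maxBirkhoffSum_le_add_comp hx]
        · rw [Set.indicator_of_notMem (show x ∉ {x | 0 < M x} from hx)]
          linarith [maxBirkhoffSum_nonneg (σ := σ) (g := g) N (σ x)]
    _ = ∫ x in {x | 0 < M x}, g x ∂μ := integral_indicator hE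

theorem measure_exists_lt_birkhoffAverage_le_of_measurable [IsFiniteMeasure μ]
    (hσ : MeasurePreserving σ μ μ) (hgm : Measurable g) (hg : Integrable g μ) {c : ℝ}
    (hc : 0 < c) :
    μ {x | ∃ n, c < birkhoffAverage ℝ σ g n x} ≤ eLpNorm g 1 μ / ENNReal.ofReal c := by
  set E : ℕ → Set X := fun N => {x | 0 < maxBirkhoffSum σ (fun y => g y - c) N x}
  have hsub : {x | ∃ n, c < birkhoffAverage ℝ σ g n x} ⊆ ⋃ N, E N := by
    rintro x ⟨n, hn⟩
    refine Set.mem_iUnion.2 ⟨n, lt_of_lt_of_le ?_ (birkhoffSum_le_maxBirkhoffSum le_rfl x)⟩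
    have hn0 : n ≠ 0 := by
      rintro rfl
      simp only [birkhoffAverage_zero] at hn
      linarith
    have hsum : birkhoffSum σ (fun y => g y - c) n x = birkhoffSum σ g n x - n * c := by
      simp [birkhoffSum, sum_sub_distrib]
    rw [birkhoffAverage, smul_eq_mul, lt_inv_mul_iff₀ (by positivity)] at hn
    rw [hsum]
    linarith
  have hE : ∀ N, μ (E N) ≤ eLpNorm g 1 μ / ENNReal.ofReal c := by
    intro N
    have h0 : 0 ≤ ∫ x in E N, (g x - c) ∂μ :=
      setIntegral_maxBirkhoffSum_pos_nonneg hσ (hgm.sub measurable_const)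
        (hg.sub (integrable_const c)) N
    rw [integral_sub hg.integrableOn (integrable_const c).integrableOn, setIntegral_const,
      smul_eq_mul] at h0
    have hle : μ.real (E N) * c ≤ ∫ x, ‖g x‖ ∂μ :=
      calc μ.real (E N) * c ≤ ∫ x in E N, g x ∂μ := by linarith
        _ ≤ ∫ x in E N, ‖g x‖ ∂μ :=
          setIntegral_mono hg.integrableOn hg.norm.integrableOn fun x => Real.le_norm_self _
        _ ≤ ∫ x, ‖g x‖ ∂μ :=
          setIntegral_le_integral hg.norm (ae_of_all _ fun x => norm_nonneg _)
    rw [eLpNorm_one_eq_lintegral_enorm, ← ofReal_integral_norm_eq_lintegral_enorm hg,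
      ← ENNReal.ofReal_div_of_pos hc, ← ofReal_measureReal (measure_ne_top μ _)]
    exact ENNReal.ofReal_le_ofReal ((le_div_iff₀ hc).2 hle)
  calc μ {x | ∃ n, c < birkhoffAverage ℝ σ g n x} ≤ μ (⋃ N, E N) := measure_mono hsub
    _ = ⨆ N, μ (E N) :=
      Monotone.measure_iUnion fun _ _ h x hx => hx.trans_le (monotone_maxBirkhoffSum h x)
    _ ≤ eLpNorm g 1 μ / ENNReal.ofReal c := iSup_le hE

theorem measure_exists_lt_birkhoffAverage_le [IsFiniteMeasure μ] (hσ : MeasurePreserving σ μ μ)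
    (hg : AEStronglyMeasurable g μ) {c : ℝ} (hc : 0 < c) :
    μ {x | ∃ n, c < birkhoffAverage ℝ σ g n x} ≤ eLpNorm g 1 μ / ENNReal.ofReal c := by
  by_cases hfin : eLpNorm g 1 μ = ∞
  · simp [hfin, ENNReal.top_div_of_ne_top ENNReal.ofReal_ne_top]
  have hgi : Integrable g μ := memLp_one_iff_integrable.1 ⟨hg, lt_top_iff_ne_top.2 hfin⟩
  have hgG : g =ᵐ[μ] hg.mk g := hg.ae_eq_mk
  have hav : ∀ᵐ x ∂μ, ∀ n, birkhoffAverage ℝ σ g n x = birkhoffAverage ℝ σ (hg.mk g) n x :=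
    ae_all_iff.2 fun n => hσ.quasiMeasurePreserving.birkhoffAverage_ae_eq_of_ae_eq ℝ hgG n
  calc μ {x | ∃ n, c < birkhoffAverage ℝ σ g n x}
      = μ {x | ∃ n, c < birkhoffAverage ℝ σ (hg.mk g) n x} :=
        measure_congr <| eventuallyEq_set.2 <| hav.mono fun x hx => by
          simp only [Set.mem_ofPred_eq, hx]
    _ ≤ eLpNorm (hg.mk g) 1 μ / ENNReal.ofReal c :=
        measure_exists_lt_birkhoffAverage_le_of_measurable hσ
          hg.stronglyMeasurable_mk.measurable (hgi.congr hgG) hc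
    _ = eLpNorm g 1 μ / ENNReal.ofReal c := by rw [eLpNorm_congr_ae hgG]

theorem tendsto_measure_exists_lt_birkhoffAverage [IsFiniteMeasure μ] {ι : Type*}
    {l : Filter ι} (hσ : MeasurePreserving σ μ μ) {g : ι → X → ℝ}
    (hgm : ∀ i, AEStronglyMeasurable (g i) μ) (hg : Tendsto (fun i => eLpNorm (g i) 1 μ) l (𝓝 0))
    {c : ℝ} (hc : 0 < c) :
    Tendsto (fun i => μ {x | ∃ n, c < birkhoffAverage ℝ σ (g i) n x}) l (𝓝 0) := by
  have hlim : Tendsto (fun i => eLpNorm (g i) 1 μ / ENNReal.ofReal c) l (𝓝 0) := by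
    simpa using ENNReal.Tendsto.div_const hg (Or.inr (ENNReal.ofReal_pos.2 hc).ne')
  exact tendsto_of_tendsto_of_tendsto_of_le_of_le tendsto_const_nhds hlim (fun _ => zero_le)
    fun i => measure_exists_lt_birkhoffAverage_le hσ (hgm i) hc

theorem ae_exists_notMem_of_tendsto_measure {ι : Type*} {l : Filter ι} [l.NeBot]
    {s : ι → Set X} (h : Tendsto (fun i => μ (s i)) l (𝓝 0)) : ∀ᵐ x ∂μ, ∃ i, x ∉ s i := by
  simp only [ae_iff, not_exists, not_not]
  exact nonpos_iff_eq_zero.1 <| ge_of_tendsto' h fun i => measure_mono fun x hx => hx i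

theorem ae_forall_exists_birkhoffAverage_le [IsFiniteMeasure μ] {σ τ : X → X}
    (hσ : MeasurePreserving σ μ μ) (hτ : MeasurePreserving τ μ μ) {g h : ℕ → X → ℝ}
    (hgm : ∀ i, AEStronglyMeasurable (g i) μ) (hhm : ∀ i, AEStronglyMeasurable (h i) μ)
    (hg : Tendsto (fun i => eLpNorm (g i) 1 μ) atTop (𝓝 0))
    (hh : Tendsto (fun i => eLpNorm (h i) 1 μ) atTop (𝓝 0)) :
    ∀ᵐ x ∂μ, ∀ ε > 0, ∃ i, ∀ n,
      birkhoffAverage ℝ σ (g i) n x ≤ ε ∧ birkhoffAverage ℝ τ (h i) n x ≤ ε := by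
  have hm : ∀ m : ℕ, ∀ᵐ x ∂μ, ∃ i, ∀ n, birkhoffAverage ℝ σ (g i) n x ≤ 1 / (m + 1) ∧
      birkhoffAverage ℝ τ (h i) n x ≤ 1 / (m + 1) := by
    intro m
    have hc : (0 : ℝ) < 1 / (m + 1) := by positivity
    have hlim := (tendsto_measure_exists_lt_birkhoffAverage hσ hgm hg hc).add
      (tendsto_measure_exists_lt_birkhoffAverage hτ hhm hh hc)
    rw [add_zero] at hlim
    refine (ae_exists_notMem_of_tendsto_measure (tendsto_of_tendsto_of_tendsto_of_le_of_le
      tendsto_const_nhds hlim (fun _ => zero_le) fun i => measure_union_le _ _)).mono ?_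
    simp only [Set.mem_union, Set.mem_ofPred_eq, not_or, not_exists, not_lt]
    exact fun x ⟨i, hgi, hhi⟩ => ⟨i, fun n => ⟨hgi n, hhi n⟩⟩
  filter_upwards [ae_all_iff.2 hm] with x hx ε hε
  obtain ⟨m, hm⟩ := exists_nat_one_div_lt hε
  obtain ⟨i, hi⟩ := hx m
  exact ⟨i, fun n => ⟨(hi n).1.trans hm.le, (hi n).2.trans hm.le⟩⟩

theorem ae_iff_exists_measurableSet_measure_eq_one [IsProbabilityMeasure μ] {P : X → Prop} :
    (∀ᵐ x ∂μ, P x) ↔ ∃ V, MeasurableSet V ∧ μ V = 1 ∧ ∀ x ∈ V, P x := by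
  refine ⟨fun h => ?_, fun ⟨V, hVm, hV, hP⟩ => ?_⟩
  · obtain ⟨V, hV, hVm, hP⟩ := h.exists_measurable_mem
    exact ⟨V, hVm, (prob_compl_eq_zero_iff hVm).1 (mem_ae_iff.1 hV), hP⟩
  · exact mem_of_superset (mem_ae_iff.2 ((prob_compl_eq_zero_iff hVm).2 hV)) hP

theorem ae_norm_le_lpNorm_top_of_eLpNorm_le {E : Type*} [NormedAddCommGroup E] {f g : X → E}
    (hf : MemLp f ∞ μ) (hg : AEStronglyMeasurable g μ) (h : eLpNorm g ∞ μ ≤ eLpNorm f ∞ μ) :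
    ∀ᵐ x ∂μ, ‖g x‖ ≤ lpNorm f ∞ μ := by
  have hle : lpNorm g ∞ μ ≤ lpNorm f ∞ μ := by
    rw [← toReal_eLpNorm hg, ← toReal_eLpNorm hf.1]
    exact ENNReal.toReal_mono hf.2.ne h
  exact (ae_le_lpNorm_exponent_top ⟨hg, h.trans_lt hf.2⟩).mono fun x hx => hx.trans hle

theorem tendsto_eLpNorm_norm_sub_comp [IsProbabilityMeasure μ] {E ι : Type*}
    [NormedAddCommGroup E] {l : Filter ι} (hσ : MeasurePreserving σ μ μ) {f : X → E}
    {F : ι → X → E} (hf : AEStronglyMeasurable f μ) (hF : ∀ i, AEStronglyMeasurable (F i) μ)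
    (h : Tendsto (fun i => eLpNorm (F i - f) 2 μ) l (𝓝 0)) :
    Tendsto (fun i => eLpNorm ((fun y => ‖f y - F i y‖) ∘ σ) 1 μ) l (𝓝 0) := by
  refine tendsto_of_tendsto_of_tendsto_of_le_of_le tendsto_const_nhds h (fun _ => zero_le)
    fun i => ?_
  calc eLpNorm ((fun y => ‖f y - F i y‖) ∘ σ) 1 μ = eLpNorm (f - F i) 1 μ :=
        (eLpNorm_comp_measurePreserving (g := fun y => ‖(f - F i) y‖)
          (hf.sub (hF i)).norm hσ).trans (eLpNorm_norm _)
    _ ≤ eLpNorm (f - F i) 2 μ := eLpNorm_le_eLpNorm_of_exponent_le one_le_two (hf.sub (hF i))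
    _ = eLpNorm (F i - f) 2 μ := eLpNorm_sub_comm _ _ _ _

theorem MeasurePreserving.toEquiv_zpow {T : X ≃ᵐ X} (hT : MeasurePreserving T μ μ) (k : ℤ) :
    MeasurePreserving ⇑(T.toEquiv ^ k) μ μ := by
  obtain ⟨n, rfl | rfl⟩ := Int.eq_nat_or_neg k
  · rw [zpow_natCast, Equiv.Perm.coe_pow]
    exact hT.iterate n
  · rw [zpow_neg, zpow_natCast, ← inv_pow, Equiv.Perm.coe_pow]
    exact (hT.symm T).iterate n

theorem MeasurePreserving.ae_forall_zpow {T : X ≃ᵐ X} (hT : MeasurePreserving T μ μ)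
    {P : X → Prop} (h : ∀ᵐ y ∂μ, P y) : ∀ᵐ x ∂μ, ∀ m : ℤ, P ((T.toEquiv ^ m) x) :=
  ae_all_iff.2 fun m => (hT.toEquiv_zpow m).quasiMeasurePreserving.ae h

end MeasureTheory

theorem cauchySeq_of_forall_exists_dist_le {α ι : Type*} [PseudoMetricSpace α] {u : ℕ → α}
    {v : ι → ℕ → α} (hv : ∀ i, CauchySeq (v i))
    (h : ∀ ε > 0, ∃ i, ∀ n, dist (u n) (v i n) ≤ ε) : CauchySeq u := by
  refine Metric.cauchySeq_iff'.2 fun ε hε => ?_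
  obtain ⟨i, hi⟩ := h (ε / 3) (by positivity)
  obtain ⟨N, hN⟩ := Metric.cauchySeq_iff'.1 (hv i) (ε / 3) (by positivity)
  refine ⟨N, fun n hn => ?_⟩
  calc dist (u n) (u N) ≤ dist (u n) (v i n) + dist (v i n) (v i N) + dist (v i N) (u N) :=
        dist_triangle4 _ _ _ _
    _ < ε := by linarith [hi n, hN n hn, dist_comm (v i N) (u N) ▸ hi N]

theorem birkhoffSum_zpow_comp_eq_sum_Icc {X M : Type*} [AddCommMonoid M] (e : Equiv.Perm X)
    (a : ℤ) (g : X → M) (N : ℕ) (x : X) :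
    birkhoffSum ⇑(e ^ a) (g ∘ ⇑(e ^ a)) N x = ∑ n ∈ Icc 1 N, g ((e ^ (a * (n : ℤ))) x) := by
  induction N with
  | zero => simp
  | succ N ih =>
    rw [birkhoffSum_succ, ih, sum_Icc_succ_top (by omega), Function.comp_apply,
      ← Equiv.Perm.coe_pow, ← Equiv.Perm.mul_apply, ← pow_succ', ← zpow_natCast, ← zpow_mul]

theorem norm_wwAvg_sub_wwAvg_le {X : Type*} [MeasurableSpace X] {T : X ≃ᵐ X} {a b : ℤ}
    {p : Polynomial ℝ} {t : ℝ} {f1 f2 g1 g2 : X → ℂ} {M1 M2 : ℝ} {x : X}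
    (hf2 : ∀ m : ℤ, ‖f2 ((T.toEquiv ^ m) x)‖ ≤ M2)
    (hg1 : ∀ m : ℤ, ‖g1 ((T.toEquiv ^ m) x)‖ ≤ M1) (N : ℕ) :
    ‖wwAvg T a b f1 f2 p t N x - wwAvg T a b g1 g2 p t N x‖ ≤
      M2 * birkhoffAverage ℝ ⇑(T.toEquiv ^ a)
          ((fun y => ‖f1 y - g1 y‖) ∘ ⇑(T.toEquiv ^ a)) N x +
        M1 * birkhoffAverage ℝ ⇑(T.toEquiv ^ b)
          ((fun y => ‖f2 y - g2 y‖) ∘ ⇑(T.toEquiv ^ b)) N x := by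
  have hterm : ∀ u v u' v' z : ℂ, ‖z‖ = 1 → ‖v‖ ≤ M2 → ‖u'‖ ≤ M1 →
      ‖u * v * z - u' * v' * z‖ ≤ M2 * ‖u - u'‖ + M1 * ‖v - v'‖ := by
    intro u v u' v' z hz hv hu'
    calc ‖u * v * z - u' * v' * z‖ = ‖(u - u') * v + u' * (v - v')‖ := by
          rw [← sub_mul, norm_mul, hz, mul_one]
          ring_nf
      _ ≤ ‖u - u'‖ * ‖v‖ + ‖u'‖ * ‖v - v'‖ := by
          refine (norm_add_le _ _).trans ?_
          rw [norm_mul, norm_mul]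
      _ ≤ M2 * ‖u - u'‖ + M1 * ‖v - v'‖ := by
          nlinarith [norm_nonneg (u - u'), norm_nonneg (v - v')]
  rw [wwAvg, wwAvg, ← mul_sub, ← sum_sub_distrib, norm_mul, norm_inv, Complex.norm_natCast,
    birkhoffAverage, birkhoffAverage, smul_eq_mul, smul_eq_mul,
    birkhoffSum_zpow_comp_eq_sum_Icc, birkhoffSum_zpow_comp_eq_sum_Icc, mul_left_comm M2,
    mul_left_comm M1, ← mul_add, mul_sum, mul_sum, ← sum_add_distrib]
  gcongr
  refine (norm_sum_le _ _).trans (sum_le_sum fun n _ => hterm _ _ _ _ _ ?_ (hf2 _) (hg1 _))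
  rw [Complex.norm_exp]
  simp

theorem wwAvg_converges_of_approx_general
    {X : Type*} [MeasurableSpace X] (μ : Measure X) [IsProbabilityMeasure μ]
    (T : X ≃ᵐ X) (hT : MeasurePreserving T μ μ) (a b : ℤ) (p : Polynomial ℝ)
    (f1 f2 : X → ℂ) (hf1 : MemLp f1 ⊤ μ) (hf2 : MemLp f2 ⊤ μ)
    (f1i f2i : ℕ → X → ℂ)
    (hf1i : ∀ i, MemLp (f1i i) ⊤ μ) (hf2i : ∀ i, MemLp (f2i i) ⊤ μ)
    (hb1 : ∀ i, eLpNorm (f1i i) ⊤ μ ≤ eLpNorm f1 ⊤ μ)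
    (hl1 : Tendsto (fun i => eLpNorm (f1i i - f1) 2 μ) atTop (nhds 0))
    (hl2 : Tendsto (fun i => eLpNorm (f2i i - f2) 2 μ) atTop (nhds 0))
    (hconv : ∀ i, ∃ V : Set X, MeasurableSet V ∧ μ V = 1 ∧
      ∀ x ∈ V, ∀ t : ℝ, ∃ L : ℂ,
        Tendsto (fun N => wwAvg T a b (f1i i) (f2i i) p t N x) atTop (nhds L)) :
    ∃ V : Set X, MeasurableSet V ∧ μ V = 1 ∧
      ∀ x ∈ V, ∀ t : ℝ, ∃ L : ℂ,
        Tendsto (fun N => wwAvg T a b f1 f2 p t N x) atTop (nhds L) := by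
  set M1 := lpNorm f1 ∞ μ
  set M2 := lpNorm f2 ∞ μ
  have hbound : ∀ᵐ x ∂μ, ∀ m : ℤ,
      ‖f2 ((T.toEquiv ^ m) x)‖ ≤ M2 ∧ ∀ i, ‖f1i i ((T.toEquiv ^ m) x)‖ ≤ M1 := by
    refine hT.ae_forall_zpow (P := fun y => ‖f2 y‖ ≤ M2 ∧ ∀ i, ‖f1i i y‖ ≤ M1) ?_
    filter_upwards [ae_le_lpNorm_exponent_top hf2, ae_all_iff.2 fun i =>
      ae_norm_le_lpNorm_top_of_eLpNorm_le hf1 (hf1i i).1 (hb1 i)] with y h2 h1 using ⟨h2, h1⟩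
  have hsmall := ae_forall_exists_birkhoffAverage_le (hT.toEquiv_zpow a) (hT.toEquiv_zpow b)
    (g := fun i => (fun y => ‖f1 y - f1i i y‖) ∘ ⇑(T.toEquiv ^ a))
    (h := fun i => (fun y => ‖f2 y - f2i i y‖) ∘ ⇑(T.toEquiv ^ b))
    (fun i => (hf1.1.sub (hf1i i).1).norm.comp_measurePreserving (hT.toEquiv_zpow a))
    (fun i => (hf2.1.sub (hf2i i).1).norm.comp_measurePreserving (hT.toEquiv_zpow b))
    (tendsto_eLpNorm_norm_sub_comp (hT.toEquiv_zpow a) hf1.1 (fun i => (hf1i i).1) hl1)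
    (tendsto_eLpNorm_norm_sub_comp (hT.toEquiv_zpow b) hf2.1 (fun i => (hf2i i).1) hl2)
  have hlim : ∀ᵐ x ∂μ, ∀ i t, ∃ L,
      Tendsto (fun N => wwAvg T a b (f1i i) (f2i i) p t N x) atTop (𝓝 L) :=
    ae_all_iff.2 fun i => ae_iff_exists_measurableSet_measure_eq_one.2 (hconv i)
  rw [← ae_iff_exists_measurableSet_measure_eq_one]
  filter_upwards [hbound, hsmall, hlim] with x hbx hsx hlx t
  refine cauchySeq_tendsto_of_complete (cauchySeq_of_forall_exists_dist_le
    (fun i => (hlx i t).choose_spec.cauchySeq) fun ε hε => ?_)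
  have hM1 : 0 ≤ M1 := lpNorm_nonneg
  have hM2 : 0 ≤ M2 := lpNorm_nonneg
  have hδ : 0 < ε / (M1 + M2 + 1) := by positivity
  obtain ⟨i, hi⟩ := hsx _ hδ
  refine ⟨i, fun N => (dist_eq_norm _ _).trans_le
    ((norm_wwAvg_sub_wwAvg_le (fun m => (hbx m).1) (fun m => (hbx m).2 i) N).trans ?_)⟩
  calc _ ≤ (M1 + M2 + 1) * (ε / (M1 + M2 + 1)) := by
        nlinarith [mul_le_mul_of_nonneg_left (hi N).1 hM2, mul_le_mul_of_nonneg_left (hi N).2 hM1]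
    _ = ε := mul_div_cancel₀ _ (by positivity)

/-- Approximation lemma: if `f1, f2 ∈ L^∞(μ)` can be approximated in `L²(μ)` by sequences
`(f1^i)`, `(f2^i)` with `‖f_j^i‖_∞ ≤ ‖f_j‖_∞` for which the Wiener-Wintner double recurrence
averages converge for all `t` off a single null set, then the same conclusion holds for
`f1, f2`. -/
theorem wwAvg_converges_of_approx
    {X : Type*} [MeasurableSpace X] (μ : Measure X) [IsProbabilityMeasure μ]
    (T : X ≃ᵐ X) (hT : MeasurePreserving T μ μ) (a b : ℤ) (p : Polynomial ℝ)
    (f1 f2 : X → ℂ) (hf1 : MemLp f1 ⊤ μ) (hf2 : MemLp f2 ⊤ μ)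
    (f1i f2i : ℕ → X → ℂ)
    (hf1i : ∀ i, MemLp (f1i i) ⊤ μ) (hf2i : ∀ i, MemLp (f2i i) ⊤ μ)
    (hb1 : ∀ i, eLpNorm (f1i i) ⊤ μ ≤ eLpNorm f1 ⊤ μ)
    (hb2 : ∀ i, eLpNorm (f2i i) ⊤ μ ≤ eLpNorm f2 ⊤ μ)
    (hl1 : Tendsto (fun i => eLpNorm (f1i i - f1) 2 μ) atTop (nhds 0))
    (hl2 : Tendsto (fun i => eLpNorm (f2i i - f2) 2 μ) atTop (nhds 0))
    (hconv : ∀ i, ∃ V : Set X, MeasurableSet V ∧ μ V = 1 ∧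
      ∀ x ∈ V, ∀ t : ℝ, ∃ L : ℂ,
        Tendsto (fun N => wwAvg T a b (f1i i) (f2i i) p t N x) atTop (nhds L)) :
    ∃ V : Set X, MeasurableSet V ∧ μ V = 1 ∧
      ∀ x ∈ V, ∀ t : ℝ, ∃ L : ℂ,
        Tendsto (fun N => wwAvg T a b f1 f2 p t N x) atTop (nhds L) :=
  wwAvg_converges_of_approx_general μ T hT a b p f1 f2 hf1 hf2 f1i f2i hf1i hf2i hb1 hl1 hl2 hconv
end

section
/- Let (X, F, μ, T) be an invertible measure-preserving system, let f1, f2 : X → ℂ be bounded measurable, let a, b ∈ ℤ, let α ∈ ℝ, and let p1, p2, q1, q2 ∈ ℤ satisfy a·p1 + b·p2 = 0 and a·q1 + b·q2 = 0. Let R_α : (ℝ/ℤ)² → (ℝ/ℤ)² be R_α(y,z) = (y + 2ᾱ, z + y + ᾱ), where ᾱ is the image of α in ℝ/ℤ, let U = T × R_α on X × (ℝ/ℤ)², and for j = 1, 2 define F_j(x, y, z) = f_j(x) e^{2πi p_j y} e^{2πi q_j z} (well-defined since p_j, q_j ∈ ℤ). Then for every N ≥ 1 and every (x, y, z) ∈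 X × (ℝ/ℤ)²: (1/N) Σ_{n=1}^{N} F1(U^{an}(x,y,z)) F2(U^{bn}(x,y,z)) = e^{2πi (p1+p2) y} e^{2πi (q1+q2) z} · (1/N) Σ_{n=1}^{N} f1(T^{an}x) f2(T^{bn}x) e^{2πi b(b−a) q2 n² α}. -/
open MeasureTheory Finset

/-- The character `w ↦ e^{2 π i q w}` on `ℝ/ℤ`, for `q : ℤ` (well-defined since `q` is an
integer). -/
noncomputable def eChar (q : ℤ) (w : AddCircle (1 : ℝ)) : ℂ :=
  (AddCircle.toCircle (q • w) : ℂ)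

/-- The Anzai skew product `R_α(y, z) = (y + 2α, z + y + α)` on `(ℝ/ℤ)²`, as a bijection. -/
noncomputable def anzaiEquiv (α : AddCircle (1 : ℝ)) :
    Equiv.Perm (AddCircle (1 : ℝ) × AddCircle (1 : ℝ)) where
  toFun q := (q.1 + 2 • α, q.2 + q.1 + α)
  invFun q := (q.1 - 2 • α, q.2 - (q.1 - 2 • α) - α)
  left_inv := fun ⟨y, z⟩ => by
    simp only [Prod.mk.injEq]
    constructor <;> abel
  right_inv := fun ⟨y, z⟩ => by
    simp only [Prod.mk.injEq]
    constructor <;> abel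

/-!
Iterating `U = T × R_α` gives `U^m (x, y, z) = (T^m x, y + 2mα, z + m y + m²α)`, so the torus
character `e(p y + q z)` picks up the factor `e(q m y) e((2pm + qm²) α)`. For `m = an` and
`m = bn` the relation `a q1 + b q2 = 0` cancels the `y`-dependence, and together with
`a p1 + b p2 = 0` it reduces the `α`-phase to `e(b(b-a) q2 n² α)`.
-/

local notation "𝕋" => AddCircle (1 : ℝ)

lemma eChar_add (q q' : ℤ) (w : 𝕋) : eChar (q + q') w = eChar q w * eChar q' w := by
  simp [eChar, add_smul, AddCircle.toCircle_add]

lemma eChar_apply_add (q : ℤ) (w w' : 𝕋) :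
    eChar q (w + w') = eChar q w * eChar q w' := by
  simp [eChar, smul_add, AddCircle.toCircle_add]

lemma eChar_zsmul_apply (q m : ℤ) (w : 𝕋) : eChar q (m • w) = eChar (q * m) w := by
  simp [eChar, smul_smul]

lemma eChar_zero (w : 𝕋) : eChar 0 w = 1 := by simp [eChar]

lemma eChar_coe (q : ℤ) (r : ℝ) :
    eChar q (r : 𝕋) = Complex.exp (2 * Real.pi * Complex.I * (q : ℝ) * r) := by
  rw [eChar, ← AddCircle.coe_zsmul, AddCircle.toCircle_apply_mk, Circle.coe_exp]
  push_cast
  ring_nf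

noncomputable def torusChar (p q : ℤ) (w : 𝕋 × 𝕋) : ℂ :=
  eChar p w.1 * eChar q w.2

lemma torusChar_mul (p q p' q' : ℤ) (w : 𝕋 × 𝕋) :
    torusChar p q w * torusChar p' q' w = torusChar (p + p') (q + q') w := by
  simp only [torusChar, eChar_add]
  ring

theorem Equiv.Perm.prodCongr_zpow {α β : Type*} (e : Equiv.Perm α) (f : Equiv.Perm β)
    (m : ℤ) : e.prodCongr f ^ m = (e ^ m).prodCongr (f ^ m) := by
  let φ : Equiv.Perm α × Equiv.Perm β →* Equiv.Perm (α × β) :=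
    { toFun := fun p => p.1.prodCongr p.2
      map_one' := rfl
      map_mul' := fun _ _ => rfl }
  exact (map_zpow φ (e, f) m).symm

lemma anzaiEquiv_apply (A : 𝕋) (w : 𝕋 × 𝕋) :
    anzaiEquiv A w = (w.1 + 2 • A, w.2 + w.1 + A) := rfl

lemma anzaiEquiv_inv_apply (A : 𝕋) (w : 𝕋 × 𝕋) :
    (anzaiEquiv A)⁻¹ w = (w.1 - 2 • A, w.2 - (w.1 - 2 • A) - A) := rfl

lemma anzaiEquiv_zpow_apply (A : 𝕋) (m : ℤ) (y z : 𝕋) :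
    (anzaiEquiv A ^ m) (y, z) = (y + (2 * m) • A, z + m • y + (m * m) • A) := by
  induction m using Int.induction_on generalizing y z with
  | zero => simp
  | succ n ih =>
    rw [zpow_add_one, Equiv.Perm.mul_apply, anzaiEquiv_apply, ih]
    refine Prod.ext ?_ ?_ <;> module
  | pred n ih =>
    rw [zpow_sub_one, Equiv.Perm.mul_apply, anzaiEquiv_inv_apply, ih]
    refine Prod.ext ?_ ?_ <;> module

lemma torusChar_anzaiEquiv_zpow (A : 𝕋) (p q m : ℤ) (w : 𝕋 × 𝕋) :
    torusChar p q ((anzaiEquiv A ^ m) w) =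
      torusChar p q w * eChar (q * m) w.1 * eChar (2 * p * m + q * m ^ 2) A := by
  obtain ⟨y, z⟩ := w
  rw [anzaiEquiv_zpow_apply, show 2 * p * m + q * m ^ 2 = p * (2 * m) + q * (m * m) by ring]
  simp only [torusChar, eChar_apply_add, eChar_zsmul_apply, eChar_add]
  ring

lemma torusChar_anzaiEquiv_zpow_mul (A : 𝕋) {a b p1 p2 q1 q2 : ℤ}
    (hp : a * p1 + b * p2 = 0) (hq : a * q1 + b * q2 = 0) (n : ℤ) (w : 𝕋 × 𝕋) :
    torusChar p1 q1 ((anzaiEquiv A ^ (a * n)) w) * torusChar p2 q2 ((anzaiEquiv A ^ (b * n)) w) =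
      torusChar (p1 + p2) (q1 + q2) w * eChar (b * (b - a) * q2 * n ^ 2) A := by
  have h_lin : eChar (q1 * (a * n)) w.1 * eChar (q2 * (b * n)) w.1 = 1 := by
    rw [← eChar_add, show q1 * (a * n) + q2 * (b * n) = (a * q1 + b * q2) * n by ring, hq,
      zero_mul, eChar_zero]
  have h_quad : eChar (2 * p1 * (a * n) + q1 * (a * n) ^ 2) A *
      eChar (2 * p2 * (b * n) + q2 * (b * n) ^ 2) A = eChar (b * (b - a) * q2 * n ^ 2) A := by
    rw [← eChar_add]
    congr 1
    linear_combination (2 * n) * hp + (a * n ^ 2) * hq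
  rw [torusChar_anzaiEquiv_zpow, torusChar_anzaiEquiv_zpow, ← h_quad, ← torusChar_mul]
  grind

theorem skew_product_average_identity_general
    {X : Type*} [MeasurableSpace X]
    (T : X ≃ᵐ X)
    (f1 f2 : X → ℂ)
    (a b : ℤ) (α : ℝ) (p1 p2 q1 q2 : ℤ)
    (hp : a * p1 + b * p2 = 0) (hq : a * q1 + b * q2 = 0)
    (U : Equiv.Perm (X × (AddCircle (1 : ℝ) × AddCircle (1 : ℝ))))
    (hU : U = (T.toEquiv.prodCongr (anzaiEquiv ((α : ℝ) : AddCircle (1 : ℝ))))) :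
    ∀ N : ℕ, 1 ≤ N → ∀ (x : X) (y z : AddCircle (1 : ℝ)),
      (N : ℂ)⁻¹ * ∑ n ∈ Finset.Icc 1 N,
        (f1 ((U ^ (a * (n : ℤ))) (x, y, z)).1 *
            eChar p1 ((U ^ (a * (n : ℤ))) (x, y, z)).2.1 *
              eChar q1 ((U ^ (a * (n : ℤ))) (x, y, z)).2.2) *
          (f2 ((U ^ (b * (n : ℤ))) (x, y, z)).1 *
              eChar p2 ((U ^ (b * (n : ℤ))) (x, y, z)).2.1 *
                eChar q2 ((U ^ (b * (n : ℤ))) (x, y, z)).2.2)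
        = eChar (p1 + p2) y * eChar (q1 + q2) z *
            ((N : ℂ)⁻¹ * ∑ n ∈ Finset.Icc 1 N,
              f1 ((T.toEquiv ^ (a * (n : ℤ))) x) * f2 ((T.toEquiv ^ (b * (n : ℤ))) x) *
                Complex.exp (2 * Real.pi * Complex.I * ((b * (b - a) * q2 : ℤ) : ℝ) *
                  (n : ℝ) ^ 2 * α)) := by
  intro N _ x y z
  subst hU
  rw [mul_left_comm _ (N : ℂ)⁻¹]
  congr 1
  rw [Finset.mul_sum]
  refine Finset.sum_congr rfl fun n _ => ?_
  have h_exp : Complex.exp (2 * Real.pi * Complex.I * ((b * (b - a) * q2 : ℤ) : ℝ) *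
      (n : ℝ) ^ 2 * α) = eChar (b * (b - a) * q2 * n ^ 2) α := by
    rw [eChar_coe]
    push_cast
    ring_nf
  have h_torus := torusChar_anzaiEquiv_zpow_mul ((α : ℝ) : AddCircle (1 : ℝ)) hp hq n (y, z)
  simp only [torusChar] at h_torus
  simp only [Equiv.Perm.prodCongr_zpow, Equiv.prodCongr_apply, Prod.map_fst, Prod.map_snd, h_exp]
  linear_combination
    f1 ((T.toEquiv ^ (a * (n : ℤ))) x) * f2 ((T.toEquiv ^ (b * (n : ℤ))) x) * h_torus

/-- The computation at the heart of the rational case: with `U = T × R_α` on `X × (ℝ/ℤ)²`,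
`F_j(x,y,z) = f_j(x) e^{2πi p_j y} e^{2πi q_j z}`, and `a p1 + b p2 = 0`, `a q1 + b q2 = 0`,
the double recurrence averages of `F1, F2` along `U` reduce to the twisted averages
`(1/N) ∑_{n=1}^N f1(T^{an}x) f2(T^{bn}x) e^{2πi b(b−a) q2 n² α}` up to the factor
`e^{2πi (p1+p2) y} e^{2πi (q1+q2) z}`. -/
theorem skew_product_average_identity
    {X : Type*} [MeasurableSpace X] (μ : Measure X) [IsProbabilityMeasure μ]
    (T : X ≃ᵐ X) (hT : MeasurePreserving T μ μ)
    (f1 f2 : X → ℂ) (hm1 : Measurable f1) (hm2 : Measurable f2)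
    (hb1 : ∃ C : ℝ, ∀ x, ‖f1 x‖ ≤ C) (hb2 : ∃ C : ℝ, ∀ x, ‖f2 x‖ ≤ C)
    (a b : ℤ) (α : ℝ) (p1 p2 q1 q2 : ℤ)
    (hp : a * p1 + b * p2 = 0) (hq : a * q1 + b * q2 = 0)
    (U : Equiv.Perm (X × (AddCircle (1 : ℝ) × AddCircle (1 : ℝ))))
    (hU : U = (T.toEquiv.prodCongr (anzaiEquiv ((α : ℝ) : AddCircle (1 : ℝ))))) :
    ∀ N : ℕ, 1 ≤ N → ∀ (x : X) (y z : AddCircle (1 : ℝ)),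
      (N : ℂ)⁻¹ * ∑ n ∈ Finset.Icc 1 N,
        (f1 ((U ^ (a * (n : ℤ))) (x, y, z)).1 *
            eChar p1 ((U ^ (a * (n : ℤ))) (x, y, z)).2.1 *
              eChar q1 ((U ^ (a * (n : ℤ))) (x, y, z)).2.2) *
          (f2 ((U ^ (b * (n : ℤ))) (x, y, z)).1 *
              eChar p2 ((U ^ (b * (n : ℤ))) (x, y, z)).2.1 *
                eChar q2 ((U ^ (b * (n : ℤ))) (x, y, z)).2.2)
        = eChar (p1 + p2) y * eChar (q1 + q2) z *
            ((N : ℂ)⁻¹ * ∑ n ∈ Finset.Icc 1 N,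
              f1 ((T.toEquiv ^ (a * (n : ℤ))) x) * f2 ((T.toEquiv ^ (b * (n : ℤ))) x) *
                Complex.exp (2 * Real.pi * Complex.I * ((b * (b - a) * q2 : ℤ) : ℝ) *
                  (n : ℝ) ^ 2 * α)) :=
  skew_product_average_identity_general T f1 f2 a b α p1 p2 q1 q2 hp hq U hU
end

section
/- Assume that for every invertible measure-preserving system (Ω, G, ν, S) on a probability space, all bounded measurable G1, G2 : Ω → ℝ, and all integers a, b, the averages (1/N) Σ_{n=1}^{N} G1(S^{an}ω) G2(S^{bn}ω) converge for ν-almost every ω as N → ∞. Then for every invertible measure-preserving system (X, F, μ, T) on a probability space, all f1, f2 ∈ L^∞(μ), all integers a ≠ b, and every t ∈ ℝ, the averages (1/N) Σ_{n=1}^{N} f1(T^{an}x) f2(T^{bn}x) e^{2πi n² t} converge for μ-almost every x as N → ∞. -/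
/-!
Adjoin to `(X, μ, T)` the skew product `σ(y, z) = (y + α, z + 2y + α)` on the 2-torus with Haar
measure, whose `m`-th power is `(y, z) ↦ (y + mα, z + 2my + m²α)`. For `H₁ = g₁ ⊗ e(b z)` and
`H₂ = g₂ ⊗ e(-a z)` the terms linear in `y` cancel:
`H₁(S^{an} p) H₂(S^{bn} p) = e((b - a) z) g₁(T^{an} x) g₂(T^{bn} x) e(ab(a - b) n² α)`, where
`S = T × σ`. With `α = t / (ab(a - b))` the double averages of `H₁, H₂` along `S`, which converge
almost everywhere by the hypothesis applied to real and imaginary parts, are the weighted averages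
at `x` times a unimodular constant, and Fubini gives convergence for almost every `x`.
If `a = 0` the first factor is constant and the remaining single average is the case `(2b, b)`
with `g₁ = 1`. Functions in `L^∞` are replaced by bounded measurable versions, which agree with
them along almost every orbit.
-/

open MeasureTheory Filter Finset Topology ENNReal

universe u

namespace Equiv.Perm

variable {α β : Type*}

theorem zpow_apply_eq_of_apply_add_one (σ : Perm α) {F : ℤ → α → α} (h₀ : ∀ x, F 0 x = x)
    (h_succ : ∀ m x, F (m + 1) x = F m (σ x)) (m : ℤ) (x : α) : (σ ^ m) x = F m x := by
  induction m using Int.induction_on generalizing x with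
  | zero => simp [h₀]
  | succ k ih => rw [zpow_add_one, mul_apply, ih, h_succ]
  | pred k ih =>
    have h := h_succ (-k - 1) (σ⁻¹ x)
    rw [sub_add_cancel, ← mul_apply, mul_inv_cancel, one_apply] at h
    rw [zpow_sub_one, mul_apply, ih, h]

theorem prodCongr_zpow_apply (e : Perm α) (f : Perm β) (m : ℤ) (p : α × β) :
    (Equiv.prodCongr e f ^ m) p = ((e ^ m) p.1, (f ^ m) p.2) :=
  zpow_apply_eq_of_apply_add_one _ (F := fun m p => ((e ^ m) p.1, (f ^ m) p.2)) (fun _ => rfl)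
    (fun m p => by simp only [zpow_add_one, mul_apply]; rfl) m p

end Equiv.Perm

namespace MeasureTheory

variable {α : Type*} [MeasurableSpace α] {μ : Measure α}

theorem MeasurePreserving.zpow {T : α ≃ᵐ α} (hT : MeasurePreserving T μ μ) (m : ℤ) :
    MeasurePreserving ⇑(T.toEquiv ^ m) μ μ := by
  obtain ⟨k, rfl | rfl⟩ := m.eq_nat_or_neg
  · rw [zpow_natCast, ← Equiv.Perm.iterate_eq_pow]
    exact hT.iterate k
  · rw [zpow_neg, zpow_natCast, ← inv_pow, ← Equiv.Perm.iterate_eq_pow]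
    exact (hT.symm T).iterate k

theorem MeasurePreserving.ae_forall_zpow_apply_eq {β : Type*} {T : α ≃ᵐ α}
    (hT : MeasurePreserving T μ μ) {f g : α → β} (h : f =ᵐ[μ] g) :
    ∀ᵐ x ∂μ, ∀ m : ℤ, f ((T.toEquiv ^ m) x) = g ((T.toEquiv ^ m) x) :=
  ae_all_iff.2 fun m => (hT.zpow m).quasiMeasurePreserving.ae_eq_comp h

theorem MemLp.exists_measurable_bounded_ae_eq {E : Type*} [NormedAddCommGroup E]
    [MeasurableSpace E] [BorelSpace E] {f : α → E} (hf : MemLp f ∞ μ) :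
    ∃ g, Measurable g ∧ (∃ C, ∀ x, ‖g x‖ ≤ C) ∧ f =ᵐ[μ] g := by
  have hm : Measurable (hf.1.mk f) := hf.1.stronglyMeasurable_mk.measurable
  set C := lpNorm f ∞ μ
  refine ⟨{x | ‖hf.1.mk f x‖ ≤ C}.indicator (hf.1.mk f),
    hm.indicator (measurableSet_le hm.norm measurable_const), ⟨C, fun x => ?_⟩, ?_⟩
  · by_cases hx : ‖hf.1.mk f x‖ ≤ C <;> simp [hx, C]
  · filter_upwards [hf.1.ae_eq_mk, ae_le_lpNorm_exponent_top hf] with x hfx hx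
    rw [Set.indicator_of_mem (by simpa [← hfx] using hx), hfx]

end MeasureTheory

theorem Complex.tendsto_of_tendsto_re_im {ι : Type*} {l : Filter ι} {f : ι → ℂ} {z : ℂ}
    (hre : Tendsto (fun i => (f i).re) l (𝓝 z.re))
    (him : Tendsto (fun i => (f i).im) l (𝓝 z.im)) : Tendsto f l (𝓝 z) := by
  simpa only [Complex.re_add_im] using hre.ofReal.add (him.ofReal.mul_const Complex.I)

section Averages

variable {X 𝕜 : Type*} [Field 𝕜]

def doubleAverage (T : Equiv.Perm X) (f₁ f₂ : X → 𝕜) (a b : ℤ) (x : X) (N : ℕ) : 𝕜 :=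
  (N : 𝕜)⁻¹ * ∑ n ∈ Icc 1 N, f₁ ((T ^ (a * (n : ℤ))) x) * f₂ ((T ^ (b * (n : ℤ))) x)

def weightedDoubleAverage (T : Equiv.Perm X) (f₁ f₂ : X → 𝕜) (a b : ℤ) (w : ℕ → 𝕜) (x : X)
    (N : ℕ) : 𝕜 :=
  (N : 𝕜)⁻¹ * ∑ n ∈ Icc 1 N, f₁ ((T ^ (a * (n : ℤ))) x) * f₂ ((T ^ (b * (n : ℤ))) x) * w n

theorem weightedDoubleAverage_comm (T : Equiv.Perm X) (f₁ f₂ : X → 𝕜) (a b : ℤ) (w : ℕ → 𝕜) :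
    weightedDoubleAverage T f₁ f₂ a b w = weightedDoubleAverage T f₂ f₁ b a w := by
  funext x N
  simp only [weightedDoubleAverage, mul_comm (f₁ _)]

theorem weightedDoubleAverage_zero_left (T : Equiv.Perm X) (f₁ f₂ : X → 𝕜) (b c : ℤ)
    (w : ℕ → 𝕜) (x : X) :
    weightedDoubleAverage T f₁ f₂ 0 b w x = f₁ x • weightedDoubleAverage T 1 f₂ c b w x := by
  ext N
  simp only [weightedDoubleAverage, zero_mul, zpow_zero, Equiv.Perm.one_apply, Pi.one_apply,
    one_mul, Pi.smul_apply, smul_eq_mul, mul_sum]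
  ring_nf

theorem weightedDoubleAverage_congr {T : Equiv.Perm X} {f₁ f₂ g₁ g₂ : X → 𝕜} {x : X}
    (h₁ : ∀ m : ℤ, f₁ ((T ^ m) x) = g₁ ((T ^ m) x)) (h₂ : ∀ m : ℤ, f₂ ((T ^ m) x) = g₂ ((T ^ m) x))
    (a b : ℤ) (w : ℕ → 𝕜) :
    weightedDoubleAverage T f₁ f₂ a b w x = weightedDoubleAverage T g₁ g₂ a b w x := by
  funext N
  simp only [weightedDoubleAverage, h₁, h₂]

theorem Complex.re_doubleAverage (T : Equiv.Perm X) (H₁ H₂ : X → ℂ) (a b : ℤ) (x : X) (N : ℕ) :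
    (doubleAverage T H₁ H₂ a b x N).re = doubleAverage T (re ∘ H₁) (re ∘ H₂) a b x N
      - doubleAverage T (im ∘ H₁) (im ∘ H₂) a b x N := by
  simp [doubleAverage, Complex.re_sum, Complex.mul_re, mul_sub, Finset.sum_sub_distrib]

theorem Complex.im_doubleAverage (T : Equiv.Perm X) (H₁ H₂ : X → ℂ) (a b : ℤ) (x : X) (N : ℕ) :
    (doubleAverage T H₁ H₂ a b x N).im = doubleAverage T (re ∘ H₁) (im ∘ H₂) a b x N
      + doubleAverage T (im ∘ H₁) (re ∘ H₂) a b x N := by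
  simp [doubleAverage, Complex.im_sum, Complex.mul_im, mul_add, Finset.sum_add_distrib]

end Averages

/-- Bourgain's double recurrence theorem, for systems in `Type u`. -/
def DoubleRecurrence : Prop :=
  ∀ (Ω : Type u) [MeasurableSpace Ω] (ν : Measure Ω) [IsProbabilityMeasure ν] (S : Ω ≃ᵐ Ω),
    MeasurePreserving S ν ν → ∀ G₁ G₂ : Ω → ℝ, Measurable G₁ → Measurable G₂ →
      (∃ C : ℝ, ∀ ω, |G₁ ω| ≤ C) → (∃ C : ℝ, ∀ ω, |G₂ ω| ≤ C) →
        ∀ a b : ℤ, ∀ᵐ ω ∂ν, ∃ L, Tendsto (doubleAverage S.toEquiv G₁ G₂ a b ω) atTop (𝓝 L)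

theorem DoubleRecurrence.ae_tendsto_complex (hyp : DoubleRecurrence.{u}) {Ω : Type u}
    [MeasurableSpace Ω] {ν : Measure Ω} [IsProbabilityMeasure ν] {S : Ω ≃ᵐ Ω}
    (hS : MeasurePreserving S ν ν) {H₁ H₂ : Ω → ℂ} (hH₁ : Measurable H₁) (hH₂ : Measurable H₂)
    (hH₁b : ∃ C, ∀ ω, ‖H₁ ω‖ ≤ C) (hH₂b : ∃ C, ∀ ω, ‖H₂ ω‖ ≤ C) (a b : ℤ) :
    ∀ᵐ ω ∂ν, ∃ L, Tendsto (doubleAverage S.toEquiv H₁ H₂ a b ω) atTop (𝓝 L) := by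
  obtain ⟨C₁, hC₁⟩ := hH₁b
  obtain ⟨C₂, hC₂⟩ := hH₂b
  have parts : ∀ p q : ℂ → ℝ, Measurable p → Measurable q → (∀ z, |p z| ≤ ‖z‖) →
      (∀ z, |q z| ≤ ‖z‖) →
      ∀ᵐ ω ∂ν, ∃ L, Tendsto (doubleAverage S.toEquiv (p ∘ H₁) (q ∘ H₂) a b ω) atTop (𝓝 L) :=
    fun p q hp hq hpz hqz => hyp Ω ν S hS _ _ (hp.comp hH₁) (hq.comp hH₂)
      ⟨C₁, fun ω => (hpz _).trans (hC₁ ω)⟩ ⟨C₂, fun ω => (hqz _).trans (hC₂ ω)⟩ a b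
  have hre := Complex.measurable_re
  have him := Complex.measurable_im
  filter_upwards [parts _ _ hre hre Complex.abs_re_le_norm Complex.abs_re_le_norm,
    parts _ _ him him Complex.abs_im_le_norm Complex.abs_im_le_norm,
    parts _ _ hre him Complex.abs_re_le_norm Complex.abs_im_le_norm,
    parts _ _ him hre Complex.abs_im_le_norm Complex.abs_re_le_norm]
    with ω ⟨Lrr, hrr⟩ ⟨Lii, hii⟩ ⟨Lri, hri⟩ ⟨Lir, hir⟩
  refine ⟨⟨Lrr - Lii, Lri + Lir⟩, Complex.tendsto_of_tendsto_re_im ?_ ?_⟩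
  · simpa only [Complex.re_doubleAverage] using hrr.sub hii
  · simpa only [Complex.im_doubleAverage] using hri.add hir

section QuadraticSkew

variable {G : Type*} [AddCommGroup G] [MeasurableSpace G] [MeasurableAdd₂ G] [MeasurableNeg G]

def quadraticSkew (α : G) : (G × G) ≃ᵐ (G × G) where
  toFun p := (p.1 + α, p.2 + (p.1 + p.1 + α))
  invFun p := (p.1 - α, p.2 - (p.1 + p.1 - α))
  left_inv p := by ext <;> simp; abel
  right_inv p := by ext <;> simp; abel
  measurable_toFun := by simp only [Equiv.coe_fn_mk]; fun_prop
  measurable_invFun := by simp only [Equiv.coe_fn_symm_mk]; fun_prop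

theorem quadraticSkew_zpow_apply (α : G) (m : ℤ) (p : G × G) :
    ((quadraticSkew α).toEquiv ^ m) p = (p.1 + m • α, p.2 + (2 * m) • p.1 + (m ^ 2) • α) :=
  Equiv.Perm.zpow_apply_eq_of_apply_add_one _
    (F := fun m p => (p.1 + m • α, p.2 + (2 * m) • p.1 + (m ^ 2) • α)) (by simp)
    (fun m p => by ext <;> simp [quadraticSkew] <;> module) m p

theorem measurePreserving_quadraticSkew (μ : Measure G) [SFinite μ] [μ.IsAddRightInvariant]
    (α : G) : MeasurePreserving (quadraticSkew α) (μ.prod μ) (μ.prod μ) :=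
  (measurePreserving_add_right μ α).skew_product (g := fun y z => z + (y + y + α))
    (by fun_prop) (.of_forall fun y => (measurePreserving_add_right μ _).map_eq)

end QuadraticSkew

noncomputable def quadraticPhase (t : ℝ) (n : ℕ) : ℂ :=
  Complex.exp (2 * Real.pi * Complex.I * ((n : ℝ) ^ 2) * t)

theorem toCircle_mul_toCircle_eq_quadraticPhase {a b : ℤ} (hD : a * b * (a - b) ≠ 0) (t : ℝ)
    (n : ℕ) (y z : UnitAddCircle) :
    let α : UnitAddCircle := (t / (a * b * (a - b) : ℤ) : ℝ)
    (AddCircle.toCircle (b • (z + (2 * (a * n)) • y + (a * n) ^ 2 • α)) : ℂ) *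
        AddCircle.toCircle (-a • (z + (2 * (b * n)) • y + (b * n) ^ 2 • α))
      = AddCircle.toCircle ((b - a) • z) * quadraticPhase t n := by
  intro α
  have phase : b • (z + (2 * (a * n)) • y + (a * n) ^ 2 • α)
      + -a • (z + (2 * (b * n)) • y + (b * n) ^ 2 • α)
      = (b - a) • z + (a * b * (a - b) * n ^ 2) • α := by module
  have angle : ((a * b * (a - b) * n ^ 2 : ℤ) • (t / (a * b * (a - b) : ℤ)) : ℝ) = n ^ 2 * t := by
    have hD' : ((a * b * (a - b) : ℤ) : ℝ) ≠ 0 := by exact_mod_cast hD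
    rw [zsmul_eq_mul, Int.cast_mul]
    field_simp
    push_cast
    ring
  rw [← Circle.coe_mul, ← AddCircle.toCircle_add, phase, AddCircle.toCircle_add, Circle.coe_mul,
    ← AddCircle.coe_zsmul, AddCircle.toCircle_apply_mk, Circle.coe_exp, angle, quadraticPhase]
  push_cast
  ring_nf

theorem doubleAverage_prodCongr_quadraticSkew {X : Type*} (T : Equiv.Perm X) (g₁ g₂ : X → ℂ)
    {a b : ℤ} (hD : a * b * (a - b) ≠ 0) (t : ℝ) (p : X × UnitAddCircle × UnitAddCircle) :
    doubleAverage (Equiv.prodCongr T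
          (quadraticSkew ((t / (a * b * (a - b) : ℤ) : ℝ) : UnitAddCircle)).toEquiv)
        (fun q => g₁ q.1 * AddCircle.toCircle (b • q.2.2))
        (fun q => g₂ q.1 * AddCircle.toCircle (-a • q.2.2)) a b p
      = (AddCircle.toCircle ((b - a) • p.2.2) : ℂ) •
          weightedDoubleAverage T g₁ g₂ a b (quadraticPhase t) p.1 := by
  funext N
  simp only [doubleAverage, weightedDoubleAverage, Pi.smul_apply, smul_eq_mul,
    Equiv.Perm.prodCongr_zpow_apply, quadraticSkew_zpow_apply, mul_sum]
  refine sum_congr rfl fun n _ => ?_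
  linear_combination ((N : ℂ)⁻¹ * g₁ ((T ^ (a * n)) p.1) * g₂ ((T ^ (b * n)) p.1)) *
    toCircle_mul_toCircle_eq_quadraticPhase hD t n p.2.1 p.2.2

theorem DoubleRecurrence.ae_tendsto_weightedDoubleAverage_of_ne_zero (hyp : DoubleRecurrence.{u})
    {X : Type u} [MeasurableSpace X] {μ : Measure X} [IsProbabilityMeasure μ] {T : X ≃ᵐ X}
    (hT : MeasurePreserving T μ μ) {g₁ g₂ : X → ℂ} (hg₁ : Measurable g₁) (hg₂ : Measurable g₂)
    (hg₁b : ∃ C, ∀ x, ‖g₁ x‖ ≤ C) (hg₂b : ∃ C, ∀ x, ‖g₂ x‖ ≤ C) {a b : ℤ}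
    (hD : a * b * (a - b) ≠ 0) (t : ℝ) :
    ∀ᵐ x ∂μ, ∃ L,
      Tendsto (weightedDoubleAverage T.toEquiv g₁ g₂ a b (quadraticPhase t) x) atTop (𝓝 L) := by
  set Q := quadraticSkew ((t / (a * b * (a - b) : ℤ) : ℝ) : UnitAddCircle)
  set ρ : Measure (UnitAddCircle × UnitAddCircle) :=
    AddCircle.haarAddCircle.prod AddCircle.haarAddCircle
  have hS : MeasurePreserving (T.prodCongr Q) (μ.prod ρ) (μ.prod ρ) :=
    hT.prod (measurePreserving_quadraticSkew _ _)
  have twist (g : X → ℂ) (k : ℤ) (hg : Measurable g) (hgb : ∃ C, ∀ x, ‖g x‖ ≤ C) :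
      let H := fun q : X × UnitAddCircle × UnitAddCircle => g q.1 * AddCircle.toCircle (k • q.2.2)
      Measurable H ∧ ∃ C, ∀ q, ‖H q‖ ≤ C := by
    refine ⟨(hg.comp measurable_fst).mul ?_, ?_⟩
    · have : Continuous fun z : UnitAddCircle => (AddCircle.toCircle (k • z) : ℂ) := by fun_prop
      exact this.measurable.comp (measurable_snd.comp measurable_snd)
    · obtain ⟨C, hC⟩ := hgb
      exact ⟨C, fun q => by simpa only [norm_mul, Circle.norm_coe, mul_one] using hC q.1⟩
  obtain ⟨hH₁, hH₁b⟩ := twist g₁ b hg₁ hg₁b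
  obtain ⟨hH₂, hH₂b⟩ := twist g₂ (-a) hg₂ hg₂b
  have hprod : ∀ᵐ p ∂μ.prod ρ, ∃ L,
      Tendsto (weightedDoubleAverage T.toEquiv g₁ g₂ a b (quadraticPhase t) p.1) atTop (𝓝 L) := by
    filter_upwards [hyp.ae_tendsto_complex hS hH₁ hH₂ hH₁b hH₂b a b] with p ⟨L, hL⟩
    rw [show (T.prodCongr Q).toEquiv = Equiv.prodCongr T.toEquiv Q.toEquiv from rfl,
      doubleAverage_prodCongr_quadraticSkew _ _ _ hD] at hL
    set c : ℂ := (AddCircle.toCircle ((b - a) • p.2.2) : ℂ)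
    have hc : c ≠ 0 := Circle.coe_ne_zero _
    exact ⟨c⁻¹ • L, by simpa only [Pi.smul_apply, inv_smul_smul₀ hc] using hL.const_smul c⁻¹⟩
  exact (Measure.ae_ae_of_ae_prod hprod).mono fun _ hx => hx.exists.choose_spec

theorem DoubleRecurrence.ae_tendsto_weightedDoubleAverage_zero_left (hyp : DoubleRecurrence.{u})
    {X : Type u} [MeasurableSpace X] {μ : Measure X} [IsProbabilityMeasure μ] {T : X ≃ᵐ X}
    (hT : MeasurePreserving T μ μ) (g₁ : X → ℂ) {g₂ : X → ℂ} (hg₂ : Measurable g₂)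
    (hg₂b : ∃ C, ∀ x, ‖g₂ x‖ ≤ C) {b : ℤ} (hb : b ≠ 0) (t : ℝ) :
    ∀ᵐ x ∂μ, ∃ L,
      Tendsto (weightedDoubleAverage T.toEquiv g₁ g₂ 0 b (quadraticPhase t) x) atTop (𝓝 L) := by
  have hD : 2 * b * b * (2 * b - b) ≠ 0 := by simp [hb, two_mul]
  filter_upwards [hyp.ae_tendsto_weightedDoubleAverage_of_ne_zero hT measurable_one hg₂
    ⟨1, fun _ => by simp⟩ hg₂b hD t] with x ⟨L, hL⟩
  exact ⟨g₁ x • L, by rw [weightedDoubleAverage_zero_left _ _ _ _ (2 * b)]; exact hL.const_smul _⟩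

theorem DoubleRecurrence.ae_tendsto_weightedDoubleAverage (hyp : DoubleRecurrence.{u})
    {X : Type u} [MeasurableSpace X] {μ : Measure X} [IsProbabilityMeasure μ] {T : X ≃ᵐ X}
    (hT : MeasurePreserving T μ μ) {g₁ g₂ : X → ℂ} (hg₁ : Measurable g₁) (hg₂ : Measurable g₂)
    (hg₁b : ∃ C, ∀ x, ‖g₁ x‖ ≤ C) (hg₂b : ∃ C, ∀ x, ‖g₂ x‖ ≤ C) {a b : ℤ} (hab : a ≠ b)
    (t : ℝ) :
    ∀ᵐ x ∂μ, ∃ L,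
      Tendsto (weightedDoubleAverage T.toEquiv g₁ g₂ a b (quadraticPhase t) x) atTop (𝓝 L) := by
  rcases eq_or_ne a 0 with rfl | ha
  · exact hyp.ae_tendsto_weightedDoubleAverage_zero_left hT g₁ hg₂ hg₂b hab.symm t
  rcases eq_or_ne b 0 with rfl | hb
  · filter_upwards [hyp.ae_tendsto_weightedDoubleAverage_zero_left hT g₂ hg₁ hg₁b ha t] with x hx
    rwa [weightedDoubleAverage_comm]
  exact hyp.ae_tendsto_weightedDoubleAverage_of_ne_zero hT hg₁ hg₂ hg₁b hg₂b
    (by simp [ha, hb, sub_ne_zero.2 hab]) t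

/-- If Bourgain's double recurrence theorem holds (a.e. convergence of
`(1/N) ∑_{n=1}^N G1(S^{an}ω) G2(S^{bn}ω)` for all invertible measure-preserving systems and
bounded measurable functions), then for any invertible measure-preserving system,
`f1, f2 ∈ L^∞(μ)`, integers `a ≠ b` and `t ∈ ℝ`, the averages
`(1/N) ∑_{n=1}^N f1(T^{an}x) f2(T^{bn}x) e^{2πi n² t}` converge μ-a.e. -/
theorem wiener_wintner_n_sq_of_double_recurrence
    (hyp : ∀ (Ω : Type u) [MeasurableSpace Ω] (ν : Measure Ω) [IsProbabilityMeasure ν]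
      (S : Ω ≃ᵐ Ω), MeasurePreserving S ν ν →
        ∀ (G1 G2 : Ω → ℝ), Measurable G1 → Measurable G2 →
          (∃ C : ℝ, ∀ ω, |G1 ω| ≤ C) → (∃ C : ℝ, ∀ ω, |G2 ω| ≤ C) →
            ∀ a b : ℤ, ∀ᵐ ω ∂ν, ∃ L : ℝ,
              Tendsto (fun N : ℕ => (N : ℝ)⁻¹ * ∑ n ∈ Finset.Icc 1 N,
                  G1 ((S.toEquiv ^ (a * (n : ℤ))) ω) * G2 ((S.toEquiv ^ (b * (n : ℤ))) ω))
                atTop (nhds L)) :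
    ∀ (X : Type u) [MeasurableSpace X] (μ : Measure X) [IsProbabilityMeasure μ]
      (T : X ≃ᵐ X), MeasurePreserving T μ μ →
        ∀ (f1 f2 : X → ℂ), MemLp f1 ⊤ μ → MemLp f2 ⊤ μ →
          ∀ (a b : ℤ), a ≠ b → ∀ (t : ℝ),
            ∀ᵐ x ∂μ, ∃ L : ℂ,
              Tendsto (fun N : ℕ => (N : ℂ)⁻¹ * ∑ n ∈ Finset.Icc 1 N,
                  f1 ((T.toEquiv ^ (a * (n : ℤ))) x) * f2 ((T.toEquiv ^ (b * (n : ℤ))) x) *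
                    Complex.exp (2 * Real.pi * Complex.I * ((n : ℝ) ^ 2) * t))
                atTop (nhds L) := by
  intro X _ μ _ T hT f₁ f₂ hf₁ hf₂ a b hab t
  obtain ⟨g₁, hg₁, hg₁b, hfg₁⟩ := hf₁.exists_measurable_bounded_ae_eq
  obtain ⟨g₂, hg₂, hg₂b, hfg₂⟩ := hf₂.exists_measurable_bounded_ae_eq
  filter_upwards [DoubleRecurrence.ae_tendsto_weightedDoubleAverage hyp hT hg₁ hg₂ hg₁b hg₂b hab t,
    hT.ae_forall_zpow_apply_eq hfg₁, hT.ae_forall_zpow_apply_eq hfg₂] with x hx h₁ h₂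
  rwa [← weightedDoubleAverage_congr h₁ h₂] at hx
end
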